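/- arXiv:2511.14944 — 5 statements merged into one kernel-verified Lean document; each statement's English description precedes it below -/
import Mathlib

section
/- Let G be a non-compact Polish group and let X be a minimal G-flow on which G acts freely (g·x = x implies g is the identity). Then every orbit G·x is a meager subset of X. -/
/-!
Suppose the orbit `G • x` is not meagre. The images `V • x` of open sets `V ⊆ G` are analytic,
hence Baire measurable, and not meagre, since countably many translates of `V` cover `G`.
Pettis' argument then makes `U • x` comeagre near `x` for every neighbourhood `U` of `1`;
with freeness this turns the orbit map `g ↦ g • x` into an embedding (Effros), and minimality
makes `G • x` comeagre.

In the enveloping semigroup `E ⊆ X → X` an element `p` with `p x ∈ G • x` is a translation,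
because the orbit map is an embedding. With minimality this makes `E` a group on which evaluation
at any point is a homeomorphism onto `X`, so for every `y` some homeomorphism of `X` carries
`G • x` onto `G • y`. Hence all orbits are comeagre, any two of them meet, `G • x = X`, and `G`,
being homeomorphic to `X`, is compact.
-/

universe u v w x

/-- A `G`-flow: a nonempty compact Hausdorff space equipped with a continuous
action of the topological group `G` by homeomorphisms. -/
structure GFlow (G : Type u) [Group G] [TopologicalSpace G] [IsTopologicalGroup G] where
  /-- the underlying phase space -/
  X : Type v
  [instTopologicalSpace : TopologicalSpace X]
  [instCompactSpace : CompactSpace X]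
  [instT2Space : T2Space X]
  [instNonempty : Nonempty X]
  [instMulAction : MulAction G X]
  [instContinuousSMul : ContinuousSMul G X]

attribute [instance] GFlow.instTopologicalSpace GFlow.instCompactSpace GFlow.instT2Space
  GFlow.instNonempty GFlow.instMulAction GFlow.instContinuousSMul

variable {G : Type u} [Group G] [TopologicalSpace G] [IsTopologicalGroup G]

/-- A `G`-map between `G`-flows: a continuous `G`-equivariant map. -/
def IsGMap (F₁ : GFlow.{u, v} G) (F₂ : GFlow.{u, w} G) (f : F₁.X → F₂.X) : Prop :=
  Continuous f ∧ ∀ (g : G) (x : F₁.X), f (g • x) = g • f x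

/-- An extension of `G`-flows: a surjective `G`-map. -/
def IsExtension (F₁ : GFlow.{u, v} G) (F₂ : GFlow.{u, w} G) (f : F₁.X → F₂.X) : Prop :=
  IsGMap F₁ F₂ f ∧ Function.Surjective f

/-- A subflow: a nonempty closed `G`-invariant subset. -/
def IsSubflow (F : GFlow.{u, v} G) (C : Set F.X) : Prop :=
  C.Nonempty ∧ IsClosed C ∧ ∀ g : G, ∀ x ∈ C, g • x ∈ C

/-- A `G`-flow is minimal if it has no proper subflows. -/
def GFlow.IsMinimal (F : GFlow.{u, v} G) : Prop :=
  ∀ C : Set F.X, IsSubflow F C → C = Set.univ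

/-- A `G`-flow `F` is `G`-projective if for all `G`-flows `Y`, `Z`, every `G`-map
`φ : F → Y` and every extension `π : Z → Y`, there is a `G`-map `ψ : F → Z`
with `π ∘ ψ = φ`. -/
def IsGProjective (F : GFlow.{u, v} G) : Prop :=
  ∀ (Y : GFlow.{u, w} G) (Z : GFlow.{u, x} G) (φ : F.X → Y.X) (π : Z.X → Y.X),
    IsGMap F Y φ → IsExtension Z Y π →
    ∃ ψ : F.X → Z.X, IsGMap F Z ψ ∧ π ∘ ψ = φ

open Set Topology Filter

section BaireCategory

variable {X : Type*} [TopologicalSpace X]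

lemma IsMeagre.exists_seq_isNowhereDense {s : Set X} (hs : IsMeagre s) :
    ∃ f : ℕ → Set X, (∀ n, IsNowhereDense (f n)) ∧ s ⊆ ⋃ n, f n := by
  obtain ⟨S, hSnd, hSc, hsS⟩ := isMeagre_iff_countable_union_isNowhereDense.1 hs
  obtain ⟨f, hf⟩ := (hSc.insert ∅).exists_eq_range (insert_nonempty _ _)
  refine ⟨f, fun n => ?_, hsS.trans ?_⟩
  · rcases (hf ▸ mem_range_self n : f n ∈ insert ∅ S) with h | h
    · exact h ▸ isNowhereDense_empty
    · exact hSnd _ h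
  · rw [← sUnion_range, ← hf]
    exact sUnion_mono (subset_insert _ _)

lemma isMeagre_diff_of_residualEq {s t : Set X} (h : s =ᶠ[residual X] t) : IsMeagre (s \ t) :=
  h.mem_iff.mono fun _ hx hxd => hxd.2 (hx.1 hxd.1)

lemma nonempty_inter_of_isMeagre_diff [BaireSpace X] {O A B : Set X} (hO : IsOpen O)
    (hne : O.Nonempty) (hA : IsMeagre (O \ A)) (hB : IsMeagre (O \ B)) : (O ∩ A ∩ B).Nonempty := by
  by_contra h
  refine not_isMeagre_of_isOpen hO hne ((hA.union hB).mono fun z hz => ?_)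
  by_cases hzA : z ∈ A
  · exact Or.inr ⟨hz, fun hzB => h ⟨z, ⟨hz, hzA⟩, hzB⟩⟩
  · exact Or.inl ⟨hz, hzA⟩

lemma IsOpen.isNowhereDense_frontier {U : Set X} (hU : IsOpen U) : IsNowhereDense (frontier U) := by
  rw [isClosed_frontier.isNowhereDense_iff, ← frontier_compl]
  exact interior_frontier hU.isClosed_compl

lemma BaireMeasurableSet.of_isMeagre_diff {s t : Set X} (ht : BaireMeasurableSet t)
    (hts : IsMeagre (t \ s)) (hst : IsMeagre (s \ t)) : BaireMeasurableSet s := by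
  rw [← inter_union_sdiff s t, inter_comm, ← sdiff_sdiff_right_self]
  exact (ht.diff hts.baireMeasurableSet).union hst.baireMeasurableSet

lemma exists_pairwiseDisjoint_forall_nonempty_inter {α : Type*} (𝒢 : Set (Set α)) :
    ∃ 𝒟 ⊆ 𝒢, 𝒟.PairwiseDisjoint id ∧ ∀ P ∈ 𝒢, P.Nonempty → ∃ D ∈ 𝒟, (P ∩ D).Nonempty := by
  obtain ⟨𝒟, h𝒟⟩ := zorn_subset {𝒟 | 𝒟 ⊆ 𝒢 ∧ 𝒟.PairwiseDisjoint id} fun c hc hchain =>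
    ⟨⋃₀ c, ⟨sUnion_subset fun _ h => (hc h).1,
      (hchain.pairwiseDisjoint_sUnion id).2 fun _ h => (hc h).2⟩, fun _ => subset_sUnion_of_mem⟩
  refine ⟨𝒟, h𝒟.prop.1, h𝒟.prop.2, fun P hP hPne => ?_⟩
  by_contra! hdisj
  have hP𝒟 : P ∈ 𝒟 := h𝒟.mem_of_prop_insert ⟨insert_subset hP h𝒟.prop.1,
    h𝒟.prop.2.insert fun D hD _ => disjoint_iff_inter_eq_empty.2 (hdisj D hD)⟩
  exact hPne.ne_empty (by simpa using hdisj P hP𝒟)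

lemma isNowhereDense_biUnion_inter_of_pairwiseDisjoint {𝒟 : Set (Set X)}
    (hdisj : 𝒟.PairwiseDisjoint id) (hopen : ∀ D ∈ 𝒟, IsOpen D) {N : Set X → Set X}
    (hN : ∀ D ∈ 𝒟, IsNowhereDense (N D)) : IsNowhereDense (⋃ D ∈ 𝒟, N D ∩ D) := by
  set M := ⋃ D ∈ 𝒟, N D ∩ D
  rw [IsNowhereDense, eq_empty_iff_forall_notMem]
  intro z hz
  obtain ⟨q, hqQ, hqM⟩ := mem_closure_iff.1 (interior_subset hz) _ isOpen_interior hz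
  obtain ⟨D, hD, -, hqD⟩ := mem_iUnion₂.1 hqM
  have hMD : D ∩ M ⊆ N D := by
    rintro y ⟨hyD, hyM⟩
    obtain ⟨D', hD', hyN, hyD'⟩ := mem_iUnion₂.1 hyM
    obtain rfl : D' = D := hdisj.elim hD' hD (not_disjoint_iff.2 ⟨y, hyD', hyD⟩)
    exact hyN
  have hsub : interior (closure M) ∩ D ⊆ interior (closure (N D)) := by
    refine interior_maximal ?_ (isOpen_interior.inter (hopen D hD))
    calc interior (closure M) ∩ D ⊆ D ∩ closure M := fun y hy => ⟨hy.2, interior_subset hy.1⟩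
      _ ⊆ closure (D ∩ M) := (hopen D hD).inter_closure
      _ ⊆ closure (N D) := closure_mono hMD
  rw [hN D hD] at hsub
  exact hsub ⟨hqQ, hqD⟩

lemma isMeagre_inter_sUnion_of_pairwiseDisjoint {S : Set X} {𝒟 : Set (Set X)}
    (hdisj : 𝒟.PairwiseDisjoint id) (hopen : ∀ D ∈ 𝒟, IsOpen D)
    (hS : ∀ D ∈ 𝒟, IsMeagre (S ∩ D)) : IsMeagre (S ∩ ⋃₀ 𝒟) := by
  choose! N hN hSN using fun D hD => (hS D hD).exists_seq_isNowhereDense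
  refine (isMeagre_iUnion fun n => (isNowhereDense_biUnion_inter_of_pairwiseDisjoint hdisj hopen
    (N := fun D => N D n) fun D hD => hN D hD n).isMeagre).mono ?_
  rintro z ⟨hzS, D, hD, hzD⟩
  obtain ⟨n, hn⟩ := mem_iUnion.1 (hSN D hD ⟨hzS, hzD⟩)
  exact mem_iUnion.2 ⟨n, mem_iUnion₂.2 ⟨D, hD, hn, hzD⟩⟩

/-- Banach's category theorem. -/
theorem isMeagre_inter_sUnion {S : Set X} {𝒲 : Set (Set X)} (hopen : ∀ W ∈ 𝒲, IsOpen W)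
    (hS : ∀ W ∈ 𝒲, IsMeagre (S ∩ W)) : IsMeagre (S ∩ ⋃₀ 𝒲) := by
  obtain ⟨𝒟, h𝒟, hdisj, hmax⟩ :=
    exists_pairwiseDisjoint_forall_nonempty_inter {D : Set X | IsOpen D ∧ ∃ W ∈ 𝒲, D ⊆ W}
  have hDopen : ∀ D ∈ 𝒟, IsOpen D := fun D hD => (h𝒟 hD).1
  have hUopen : IsOpen (⋃₀ 𝒟) := isOpen_sUnion hDopen
  have hdense : ⋃₀ 𝒲 ⊆ closure (⋃₀ 𝒟) := by
    rintro z ⟨W, hW, hzW⟩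
    by_contra hz
    obtain ⟨D, hD, y, ⟨-, hy⟩, hyD⟩ := hmax (W \ closure (⋃₀ 𝒟))
      ⟨(hopen W hW).sdiff isClosed_closure, W, hW, sdiff_subset⟩ ⟨z, hzW, hz⟩
    exact hy (subset_closure ⟨D, hD, hyD⟩)
  have hcover : S ∩ ⋃₀ 𝒲 ⊆ frontier (⋃₀ 𝒟) ∪ S ∩ ⋃₀ 𝒟 := by
    rintro z ⟨hzS, hzW⟩
    by_cases hz : z ∈ ⋃₀ 𝒟
    · exact Or.inr ⟨hzS, hz⟩
    · exact Or.inl ⟨hdense hzW, by rwa [hUopen.interior_eq]⟩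
  refine (IsMeagre.union hUopen.isNowhereDense_frontier.isMeagre ?_).mono hcover
  refine isMeagre_inter_sUnion_of_pairwiseDisjoint hdisj hDopen fun D hD => ?_
  obtain ⟨-, W, hW, hDW⟩ := h𝒟 hD
  exact (hS W hW).mono (inter_subset_inter_right S hDW)

def baireHull (B : Set X) : Set X := closure B \ ⋃₀ {W | IsOpen W ∧ IsMeagre (B ∩ W)}

lemma baireHull_subset_closure (B : Set X) : baireHull B ⊆ closure B := sdiff_subset

lemma baireMeasurableSet_baireHull (B : Set X) : BaireMeasurableSet (baireHull B) :=
  isClosed_closure.isOpen_compl.baireMeasurableSet.of_compl.diff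
    (isOpen_sUnion fun _ hW => hW.1).baireMeasurableSet

lemma isMeagre_diff_baireHull (B : Set X) : IsMeagre (B \ baireHull B) := by
  refine (isMeagre_inter_sUnion (𝒲 := {W | IsOpen W ∧ IsMeagre (B ∩ W)}) (fun W hW => hW.1)
    fun W hW => hW.2).mono ?_
  rintro z ⟨hzB, hz⟩
  by_contra hzW
  exact hz ⟨subset_closure hzB, fun h => hzW ⟨hzB, h⟩⟩

lemma isMeagre_baireHull_diff {B C : Set X} (hBC : B ⊆ C) (hC : BaireMeasurableSet C) :
    IsMeagre (baireHull B \ C) := by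
  obtain ⟨U, hU, hHU⟩ := ((baireMeasurableSet_baireHull B).diff hC).residualEq_isOpen
  have hUB : IsMeagre (B ∩ U) := by
    refine (isMeagre_diff_of_residualEq hHU.symm).mono ?_
    exact fun z hz => ⟨hz.2, fun h => h.2 (hBC hz.1)⟩
  refine (isMeagre_diff_of_residualEq hHU).mono ?_
  exact fun z hz => ⟨hz, fun hzU => hz.1.2 ⟨U, ⟨hU, hUB⟩, hzU⟩⟩

lemma isMeagre_baireHull_diff_iUnion_baireHull {ι : Sort*} [Countable ι] {B : Set X}
    {C : ι → Set X} (hBC : B ⊆ ⋃ i, C i) : IsMeagre (baireHull B \ ⋃ i, baireHull (C i)) := by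
  set M := ⋃ i, C i \ baireHull (C i)
  have hM : IsMeagre M := isMeagre_iUnion fun i => isMeagre_diff_baireHull _
  have hcover : B ⊆ (⋃ i, baireHull (C i)) ∪ M := fun z hz => by
    obtain ⟨i, hi⟩ := mem_iUnion.1 (hBC hz)
    by_cases hzC : z ∈ baireHull (C i)
    · exact Or.inl (mem_iUnion.2 ⟨i, hzC⟩)
    · exact Or.inr (mem_iUnion.2 ⟨i, hi, hzC⟩)
  have hBM : BaireMeasurableSet ((⋃ i, baireHull (C i)) ∪ M) :=
    (BaireMeasurableSet.iUnion fun i => baireMeasurableSet_baireHull (C i)).union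
      hM.baireMeasurableSet
  refine ((isMeagre_baireHull_diff hcover hBM).union hM).mono fun z ⟨hzB, hz⟩ => ?_
  by_cases hzM : z ∈ M
  · exact Or.inr hzM
  · exact Or.inl ⟨hzB, fun h => h.elim hz hzM⟩

end BaireCategory

section Analytic

open PiNat

lemma exists_forall_res_of_forall_exists_cons {α : Type*} {P : List α → Prop} (hnil : P [])
    (hcons : ∀ s, P s → ∃ a, P (a :: s)) : ∃ x : ℕ → α, ∀ n, P (res x n) := by
  have : Nonempty α := (hcons [] hnil).nonempty
  choose! next hnext using hcons
  obtain ⟨b, hb0, hbsucc⟩ : ∃ b : ℕ → List α, b 0 = [] ∧ ∀ n, b (n + 1) = next (b n) :: b n :=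
    ⟨fun n => Nat.rec [] (fun _ s => next s :: s) n, rfl, fun _ => rfl⟩
  have hres : ∀ n, res (fun n => next (b n)) n = b n := by
    intro n
    induction n with
    | zero => exact hb0.symm
    | succ n ih => rw [res_succ, ih, hbsucc]
  refine ⟨fun n => next (b n), fun n => ?_⟩
  rw [hres]
  induction n with
  | zero => rwa [hb0]
  | succ n ih => rw [hbsucc]; exact hnext _ ih

variable {α : Type*}

-- `res x n = [x (n - 1), …, x 0]`, so a branch grows by `cons`.
def listCylinder (s : List α) : Set (ℕ → α) := {x | res x s.length = s}

@[simp]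
lemma listCylinder_nil : listCylinder ([] : List α) = univ := by
  simp [listCylinder]

lemma listCylinder_eq_iUnion_cons (s : List α) : listCylinder s = ⋃ a, listCylinder (a :: s) := by
  ext x
  simp only [listCylinder, mem_ofPred_eq, mem_iUnion, List.length_cons, res_succ,
    List.cons.injEq]
  exact ⟨fun h => ⟨_, rfl, h⟩, fun ⟨_, _, h⟩ => h⟩

lemma listCylinder_res (x : ℕ → α) (n : ℕ) : listCylinder (res x n) = cylinder x n := by
  rw [cylinder_eq_res, listCylinder, res_length]

variable {X : Type*} [TopologicalSpace X] [T2Space X]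

lemma eq_of_forall_mem_closure_image_cylinder [TopologicalSpace α] [DiscreteTopology α]
    {ψ : (ℕ → α) → X} {x : ℕ → α} (hψ : ContinuousAt ψ x) {z : X}
    (hz : ∀ n, z ∈ closure (ψ '' cylinder x n)) : z = ψ x := by
  by_contra hne
  obtain ⟨U, V, hU, hV, hzU, hxV, hUV⟩ := t2_separation hne
  obtain ⟨_, ⟨y, n, rfl⟩, hxy, hyV⟩ :=
    (isTopologicalBasis_cylinders fun _ => α).mem_nhds_iff.1 (hψ (hV.mem_nhds hxV))
  rw [← mem_cylinder_iff_eq.1 hxy] at hyV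
  obtain ⟨_, hwU, w, hw, rfl⟩ := mem_closure_iff.1 (hz n) U hU hzU
  exact hUV.ne_of_mem hwU (hyV hw) rfl

theorem baireMeasurableSet_range_of_continuous {ψ : (ℕ → ℕ) → X} (hψ : Continuous ψ) :
    BaireMeasurableSet (range ψ) := by
  set A : List ℕ → Set X := fun s => baireHull (ψ '' listCylinder s)
  have hsplit : ∀ s, IsMeagre (A s \ ⋃ i, A (i :: s)) := fun s =>
    isMeagre_baireHull_diff_iUnion_baireHull (by rw [listCylinder_eq_iUnion_cons s, image_iUnion])
  -- Off the meagre set `E`, a point of `A []` lies on an infinite branch `x` of the scheme `A`,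
  -- and then it is `ψ x`.
  set E := (⋃ s, A s \ ⋃ i, A (i :: s)) ∪ (range ψ \ A [])
  have hE : IsMeagre E := by
    refine (isMeagre_iUnion hsplit).union ?_
    simpa [A] using isMeagre_diff_baireHull (range ψ)
  have hA : A [] \ range ψ ⊆ E := by
    rintro z ⟨hzA, hzψ⟩
    by_contra hzE
    have hcons : ∀ s, z ∈ A s → ∃ i, z ∈ A (i :: s) := fun s hs => by
      by_contra! h
      exact hzE (Or.inl (mem_iUnion.2 ⟨s, hs, by simpa using h⟩))
    obtain ⟨x, hx⟩ := exists_forall_res_of_forall_exists_cons hzA hcons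
    refine hzψ ⟨x, (eq_of_forall_mem_closure_image_cylinder hψ.continuousAt fun n => ?_).symm⟩
    rw [← listCylinder_res]
    exact baireHull_subset_closure _ (hx n)
  exact (baireMeasurableSet_baireHull _).of_isMeagre_diff (hE.mono (by simpa [A] using hA))
    (hE.mono subset_union_right)

theorem MeasureTheory.AnalyticSet.baireMeasurableSet {s : Set X} (hs : AnalyticSet s) :
    BaireMeasurableSet s := by
  rw [AnalyticSet_def] at hs
  rcases hs with rfl | ⟨ψ, hψ, rfl⟩
  · exact IsMeagre.empty.baireMeasurableSet
  · exact baireMeasurableSet_range_of_continuous hψ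

end Analytic

section Orbit

open MulAction Pointwise TopologicalSpace

variable {G X : Type*} [Group G] [TopologicalSpace X] [MulAction G X]

lemma IsMeagre.smul_set [ContinuousConstSMul G X] {s : Set X} (hs : IsMeagre s) (g : G) :
    IsMeagre (g • s) := by
  rw [← image_smul]
  exact (Homeomorph.smul g).isInducing.isMeagre_image hs

variable [TopologicalSpace G] [IsTopologicalGroup G] [ContinuousSMul G X]

lemma exists_mem_nhds_one_inv_mul_mem {U : Set G} (hU : U ∈ 𝓝 (1 : G)) :
    ∃ V ∈ 𝓝 (1 : G), ∀ a ∈ V, ∀ b ∈ V, a⁻¹ * b ∈ U := by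
  obtain ⟨V, hV, hVU⟩ := exists_nhds_split_inv hU
  exact ⟨V⁻¹, inv_mem_nhds_one G hV, fun a ha b hb => by simpa using hVU _ ha _ hb⟩

lemma Dense.iUnion_smul_eq_iUnion_smul {D : Set G} (hD : Dense D) {O : Set X} (hO : IsOpen O) :
    ⋃ d ∈ D, d • O = ⋃ g : G, g • O := by
  refine (iUnion₂_subset fun d _ => subset_iUnion (· • O) d).antisymm fun z hz => ?_
  obtain ⟨g, hg⟩ := mem_iUnion.1 hz
  obtain ⟨d, hdD, hd⟩ := hD.exists_mem_open (hO.preimage (continuous_inv.smul continuous_const))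
    ⟨g, mem_smul_set_iff_inv_smul_mem.1 hg⟩
  exact mem_iUnion₂.2 ⟨d, hdD, mem_smul_set_iff_inv_smul_mem.2 hd⟩

lemma not_isMeagre_image_smul_of_not_isMeagre_orbit [SeparableSpace G] {x : X}
    (hx : ¬IsMeagre (orbit G x)) {V : Set G} (hV : IsOpen V) (hVne : V.Nonempty) :
    ¬IsMeagre ((· • x) '' V) := by
  obtain ⟨D, hDc, hD⟩ := exists_countable_dense G
  refine fun hVx => hx ((isMeagre_biUnion hDc fun d _ => hVx.smul_set d).mono ?_)
  rintro _ ⟨g, rfl⟩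
  obtain ⟨v, hv⟩ := hVne
  have hg : g ∈ ⋃ d ∈ D, d • V := by
    rw [hD.iUnion_smul_eq_iUnion_smul hV]
    exact mem_iUnion.2 ⟨g * v⁻¹, v, hv, by simp⟩
  obtain ⟨d, hdD, w, hw, rfl⟩ := mem_iUnion₂.1 hg
  exact mem_iUnion₂.2 ⟨d, hdD, w • x, ⟨w, hw, rfl⟩, (mul_smul d w x).symm⟩

variable [PolishSpace G] [T2Space X]

lemma exists_isOpen_isMeagre_diff_image_smul {x : X} (hx : ¬IsMeagre (orbit G x)) {U : Set G}
    (hU : U ∈ 𝓝 (1 : G)) : ∃ O, IsOpen O ∧ x ∈ O ∧ IsMeagre (O \ (· • x) '' U) := by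
  -- `V • x` is Baire measurable and not meagre, so comeagre in some open `W` meeting it.
  obtain ⟨V, hV, hVU⟩ := exists_mem_nhds_one_inv_mul_mem hU
  have hVx : BaireMeasurableSet ((· • x) '' interior V) :=
    (isOpen_interior.analyticSet_image (continuous_id.smul continuous_const)).baireMeasurableSet
  obtain ⟨W, hW, hVW⟩ := hVx.residualEq_isOpen
  obtain ⟨_, ⟨v, hv, rfl⟩, hvW⟩ : ((· • x) '' interior V ∩ W).Nonempty := by
    refine not_not.1 fun h => not_isMeagre_image_smul_of_not_isMeagre_orbit hx isOpen_interior
      ⟨1, mem_interior_iff_mem_nhds.2 hV⟩ ((isMeagre_diff_of_residualEq hVW).mono ?_)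
    exact fun z hz => ⟨hz, fun hzW => h ⟨z, hz, hzW⟩⟩
  refine ⟨v⁻¹ • W, hW.smul _, mem_smul_set_iff_inv_smul_mem.2 (by simpa using hvW), ?_⟩
  refine ((isMeagre_diff_of_residualEq hVW.symm).smul_set v⁻¹).mono ?_
  rw [smul_set_sdiff]
  refine sdiff_subset_sdiff_right ?_
  rintro _ ⟨_, ⟨b, hb, rfl⟩, rfl⟩
  exact ⟨v⁻¹ * b, hVU _ (interior_subset hv) _ (interior_subset hb), mul_smul _ _ _⟩

theorem isInducing_smul_of_not_isMeagre_orbit [BaireSpace X] {x : X}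
    (hx : ¬IsMeagre (orbit G x)) (hinj : Function.Injective (· • x : G → X)) :
    IsInducing (· • x : G → X) := by
  refine isInducing_iff_nhds.2 fun h => le_antisymm
    ((continuous_id.smul continuous_const).tendsto h).le_comap fun W hW => ?_
  have hWh : (· * h) ⁻¹' W ∈ 𝓝 (1 : G) :=
    (continuous_mul_const h).tendsto 1 (by rwa [one_mul])
  obtain ⟨V, hV, hVW⟩ := exists_mem_nhds_one_inv_mul_mem hWh
  obtain ⟨O, hO, hhO, hOV⟩ := exists_isOpen_isMeagre_diff_image_smul (x := h • x)
    (by rwa [orbit_smul]) hV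
  refine mem_comap.2 ⟨O, hO.mem_nhds hhO, fun g hg => ?_⟩
  obtain ⟨O', hO', hgO', hO'V⟩ := exists_isOpen_isMeagre_diff_image_smul (x := g • x)
    (by rwa [orbit_smul]) hV
  -- `V • h • x` and `V • g • x` are comeagre in `O ∩ O'`, so they meet.
  obtain ⟨_, ⟨-, a, ha, rfl⟩, b, hb, hab⟩ := nonempty_inter_of_isMeagre_diff (hO.inter hO')
    ⟨g • x, hg, hgO'⟩ (hOV.mono (sdiff_subset_sdiff_left inter_subset_left))
    (hO'V.mono (sdiff_subset_sdiff_left inter_subset_right))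
  have hgab : g = b⁻¹ * a * h := by
    rw [mul_assoc, eq_inv_mul_iff_mul_eq]
    exact hinj (by simp only [mul_smul, hab])
  exact hgab ▸ hVW b hb a ha

lemma isMeagre_compl_orbit_of_not_isMeagre_orbit [IsMinimal G X] {x : X}
    (hx : ¬IsMeagre (orbit G x)) : IsMeagre (orbit G x)ᶜ := by
  obtain ⟨O, hO, hxO, hOx⟩ := exists_isOpen_isMeagre_diff_image_smul hx univ_mem
  rw [image_univ, ← orbit] at hOx
  obtain ⟨D, hDc, hD⟩ := exists_countable_dense G
  refine (isMeagre_biUnion hDc fun d _ => hOx.smul_set d).mono fun z hz => ?_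
  have hzO : z ∈ ⋃ d ∈ D, d • O := by
    rw [hD.iUnion_smul_eq_iUnion_smul hO, hO.iUnion_smul G ⟨x, hxO⟩]
    trivial
  obtain ⟨d, hd, hzd⟩ := mem_iUnion₂.1 hzO
  refine mem_iUnion₂.2 ⟨d, hd, ?_⟩
  rw [smul_set_sdiff, smul_orbit]
  exact ⟨hzd, hz⟩

end Orbit

section Enveloping

open MulAction

variable (G X : Type*) [Monoid G] [TopologicalSpace X] [MulAction G X]

def envelopingSemigroup : Set (X → X) := closure (range fun g : G => (g • · : X → X))

variable {G X}

lemma isClosed_envelopingSemigroup : IsClosed (envelopingSemigroup G X) := isClosed_closure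

lemma smul_mem_envelopingSemigroup (g : G) : (g • · : X → X) ∈ envelopingSemigroup G X :=
  subset_closure ⟨g, rfl⟩

lemma id_mem_envelopingSemigroup : (id : X → X) ∈ envelopingSemigroup G X := by
  have h1 := smul_mem_envelopingSemigroup (X := X) (1 : G)
  simp only [one_smul] at h1
  exact h1

lemma comp_mem_envelopingSemigroup [ContinuousConstSMul G X] {p q : X → X}
    (hp : p ∈ envelopingSemigroup G X) (hq : q ∈ envelopingSemigroup G X) :
    p ∘ q ∈ envelopingSemigroup G X := by
  have hsmul : ∀ g : G, (g • ·) ∘ q ∈ envelopingSemigroup G X := fun g =>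
    map_mem_closure (continuous_pi fun z => (continuous_apply z).const_smul g) hq
      (by rintro _ ⟨a, rfl⟩; exact ⟨g * a, funext fun z => mul_smul g a z⟩)
  exact isClosed_envelopingSemigroup.closure_subset <| map_mem_closure (f := (· ∘ q)) (t := envelopingSemigroup G X)
    (continuous_pi fun z => continuous_apply (q z)) hp (by rintro _ ⟨g, rfl⟩; exact hsmul g)

variable [CompactSpace X]

lemma isCompact_envelopingSemigroup : IsCompact (envelopingSemigroup G X) :=
  isClosed_envelopingSemigroup.isCompact

variable [T2Space X] [ContinuousConstSMul G X]

lemma image_eval_envelopingSemigroup [IsMinimal G X] (y : X) :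
    (fun p : X → X => p y) '' envelopingSemigroup G X = univ := by
  refine (eq_empty_or_univ_of_smul_invariant_closed G
    (isCompact_envelopingSemigroup.image (continuous_apply y)).isClosed ?_).resolve_left
    (Nonempty.ne_empty ⟨y, id, id_mem_envelopingSemigroup, rfl⟩)
  rintro g _ ⟨_, ⟨p, hp, rfl⟩, rfl⟩
  exact ⟨_, comp_mem_envelopingSemigroup (smul_mem_envelopingSemigroup g) hp, rfl⟩

end Enveloping

section InducingOrbitMap

open MulAction

variable {G X : Type*} [Monoid G] [TopologicalSpace G] [TopologicalSpace X] [MulAction G X]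
  [ContinuousSMul G X] [T2Space X] {x : X}

lemma eq_smul_of_mem_envelopingSemigroup (hx : IsInducing (· • x : G → X)) {p : X → X}
    (hp : p ∈ envelopingSemigroup G X) {h : G} (hpx : p x = h • x) : p = (h • ·) := by
  set l := comap (fun g : G => (g • · : X → X)) (𝓝 p)
  have : l.NeBot := comap_neBot_iff.2 fun t ht => by
    obtain ⟨_, hpt, g, rfl⟩ := mem_closure_iff_nhds.1 hp t ht
    exact ⟨g, hpt⟩
  have hl : Tendsto (fun g : G => (g • · : X → X)) l (𝓝 p) := tendsto_comap
  have hlh : Tendsto id l (𝓝 h) :=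
    hx.tendsto_nhds_iff.2 (hpx ▸ ((continuous_apply x).tendsto p).comp hl)
  funext z
  exact tendsto_nhds_unique (((continuous_apply z).tendsto p).comp hl)
    (((continuous_id.smul continuous_const).tendsto h).comp hlh)

variable [CompactSpace X] [IsMinimal G X]

lemma exists_comp_eq_id_of_mem_envelopingSemigroup (hx : IsInducing (· • x : G → X))
    {p : X → X} (hp : p ∈ envelopingSemigroup G X) :
    ∃ q ∈ envelopingSemigroup G X, q ∘ p = id ∧ p ∘ q = id := by
  have hleft : ∀ p ∈ envelopingSemigroup G X, ∃ q ∈ envelopingSemigroup G X, q ∘ p = id := by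
    intro p hp
    obtain ⟨q, hq, hqp⟩ : x ∈ (fun q : X → X => q (p x)) '' envelopingSemigroup G X := by
      rw [image_eval_envelopingSemigroup]
      trivial
    refine ⟨q, hq, ?_⟩
    have h1 := eq_smul_of_mem_envelopingSemigroup hx (comp_mem_envelopingSemigroup hq hp)
      (h := 1) (by rw [one_smul]; exact hqp)
    exact h1.trans (funext (one_smul G))
  obtain ⟨q, hq, hqp⟩ := hleft p hp
  obtain ⟨r, -, hrq⟩ := hleft q hq
  refine ⟨q, hq, hqp, ?_⟩
  calc p ∘ q = (r ∘ q) ∘ p ∘ q := by rw [hrq]; rfl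
    _ = r ∘ (q ∘ p) ∘ q := rfl
    _ = id := by rw [hqp]; exact hrq

lemma injOn_eval_envelopingSemigroup (hx : IsInducing (· • x : G → X)) (y : X) :
    InjOn (fun p : X → X => p y) (envelopingSemigroup G X) := by
  intro p hp p' hp' (hpp' : p y = p' y)
  obtain ⟨r, hr, (hrx : r x = y)⟩ : y ∈ (fun r : X → X => r x) '' envelopingSemigroup G X := by
    rw [image_eval_envelopingSemigroup]
    trivial
  obtain ⟨s, -, -, hrs⟩ := exists_comp_eq_id_of_mem_envelopingSemigroup hx hr
  obtain ⟨q, hq, hqp', hp'q⟩ := exists_comp_eq_id_of_mem_envelopingSemigroup hx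
    (comp_mem_envelopingSemigroup hp' hr)
  have hqp : q ∘ p ∘ r = id := by
    have h1 := eq_smul_of_mem_envelopingSemigroup hx
      (comp_mem_envelopingSemigroup hq (comp_mem_envelopingSemigroup hp hr)) (h := 1)
      (by rw [one_smul, Function.comp_apply, Function.comp_apply, hrx, hpp', ← hrx]
          exact congrFun hqp' x)
    exact h1.trans (funext (one_smul G))
  calc p = ((p' ∘ r) ∘ q) ∘ p ∘ r ∘ s := by rw [hp'q, hrs]; rfl
    _ = p' ∘ r ∘ (q ∘ p ∘ r) ∘ s := rfl
    _ = p' := by rw [hqp]; exact congrArg (p' ∘ ·) hrs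

lemma bijective_eval_envelopingSemigroup (hx : IsInducing (· • x : G → X)) (y : X) :
    Function.Bijective fun p : envelopingSemigroup G X => p.1 y := by
  refine ⟨(injOn_eval_envelopingSemigroup hx y).injective, fun z => ?_⟩
  obtain ⟨p, hp, rfl⟩ : z ∈ (fun p : X → X => p y) '' envelopingSemigroup G X := by
    rw [image_eval_envelopingSemigroup]
    trivial
  exact ⟨⟨p, hp⟩, rfl⟩

lemma exists_homeomorph_smul_eq_smul (hx : IsInducing (· • x : G → X)) (y : X) :
    ∃ τ : X ≃ₜ X, ∀ g : G, τ (g • x) = g • y := by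
  have : CompactSpace (envelopingSemigroup G X) :=
    isCompact_iff_compactSpace.1 isCompact_envelopingSemigroup
  let ev : X → envelopingSemigroup G X ≃ₜ X := fun z =>
    ((continuous_apply z).comp continuous_subtype_val).homeoOfEquivCompactToT2
      (f := Equiv.ofBijective _ (bijective_eval_envelopingSemigroup hx z))
  refine ⟨(ev x).symm.trans (ev y), fun g => ?_⟩
  have hg : (ev x).symm (g • x) = ⟨(g • ·), smul_mem_envelopingSemigroup g⟩ :=
    (ev x).symm_apply_eq.2 rfl
  simp only [Homeomorph.trans_apply, hg]
  rfl

end InducingOrbitMap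

open MulAction in
lemma orbit_eq_univ_of_isInducing {G X : Type*} [Group G] [TopologicalSpace G]
    [TopologicalSpace X] [MulAction G X] [ContinuousSMul G X] [CompactSpace X] [T2Space X]
    [BaireSpace X] [IsMinimal G X] {x : X} (hx : IsInducing (· • x : G → X))
    (hcomeagre : IsMeagre (orbit G x)ᶜ) : orbit G x = univ := by
  refine eq_univ_of_forall fun y => ?_
  obtain ⟨τ, hτ⟩ := exists_homeomorph_smul_eq_smul hx y
  have hτorbit : τ '' orbit G x = orbit G y := by
    rw [orbit, orbit, ← range_comp]
    exact congrArg range (funext hτ)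
  have hy : IsMeagre (orbit G y)ᶜ := by
    rw [← hτorbit, ← image_compl_eq τ.bijective]
    exact τ.isInducing.isMeagre_image hcomeagre
  obtain ⟨z, ⟨-, hzx⟩, hzy⟩ := nonempty_inter_of_isMeagre_diff (A := orbit G x) (B := orbit G y)
    isOpen_univ ⟨x, trivial⟩ (by rwa [← compl_eq_univ_sdiff]) (by rwa [← compl_eq_univ_sdiff])
  rw [← orbit_eq_iff.2 hzx, orbit_eq_iff.2 hzy]
  exact mem_orbit_self y

lemma GFlow.IsMinimal.isMinimal {G : Type*} [Group G] [TopologicalSpace G] [IsTopologicalGroup G]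
    {F : GFlow G} (hF : F.IsMinimal) : MulAction.IsMinimal G F.X :=
  (isMinimal_iff_isClosed_smul_invariant G).2 fun s hs hsmul =>
    s.eq_empty_or_nonempty.imp_right fun hne =>
      hF s ⟨hne, hs, fun g _ hx => hsmul g (smul_mem_smul_set hx)⟩

/-- If `G` is a non-compact Polish group and `X` is a minimal `G`-flow on
which `G` acts freely, then every orbit is meager. -/
theorem statement4 {G : Type u} [Group G] [TopologicalSpace G] [IsTopologicalGroup G]
    [PolishSpace G] (hG : ¬ CompactSpace G)
    (F : GFlow.{u, v} G) (hmin : F.IsMinimal)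
    (hfree : ∀ (g : G) (x : F.X), g • x = x → g = 1)
    (x : F.X) : IsMeagre (MulAction.orbit G x : Set F.X) := by
  have := hmin.isMinimal
  by_contra hx
  have hinj : Function.Injective (· • x : G → F.X) := fun a b hab =>
    inv_mul_eq_one.1 (hfree _ x (by rw [mul_smul, ← show a • x = b • x from hab, inv_smul_smul]))
  have hind := isInducing_smul_of_not_isMeagre_orbit hx hinj
  have horbit := orbit_eq_univ_of_isInducing hind (isMeagre_compl_orbit_of_not_isMeagre_orbit hx)
  exact hG ⟨hind.isCompact_iff.2 (by rw [image_univ, ← MulAction.orbit, horbit]; exact isCompact_univ)⟩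
end

section
/- Let G be a topological group and let φ: L → K be an affine G-irreducible extension of affine G-flows. Then φ maps cl(ext(L)) onto cl(ext(K)), and the restriction of φ to cl(ext(L)) is a G-irreducible extension of G-flows from cl(ext(L)) onto cl(ext(K)). -/
universe u v w x

/-- An affine `G`-flow: a nonempty compact convex subset of a Hausdorff locally convex
real topological vector space, equipped with a continuous action of `G` by affine
homeomorphisms.  The action is recorded as a function `smul : G → E → E` on the ambient
space whose behaviour is only constrained on `carrier`. -/
structure AffineFlow (G : Type u) [Group G] [TopologicalSpace G] [IsTopologicalGroup G] where
  /-- the ambient locally convex topological real vector space -/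
  E : Type v
  [instAddCommGroup : AddCommGroup E]
  [instModule : Module ℝ E]
  [instTopologicalSpace : TopologicalSpace E]
  [instT2Space : T2Space E]
  [instTopologicalAddGroup : IsTopologicalAddGroup E]
  [instContinuousSMul : ContinuousSMul ℝ E]
  [instLocallyConvexSpace : LocallyConvexSpace ℝ E]
  /-- the compact convex set itself -/
  carrier : Set E
  nonempty' : carrier.Nonempty
  isCompact' : IsCompact carrier
  convex' : Convex ℝ carrier
  /-- the action of `G` -/
  smul : G → E → E
  smul_mem' : ∀ g : G, ∀ x ∈ carrier, smul g x ∈ carrier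
  one_smul' : ∀ x ∈ carrier, smul 1 x = x
  mul_smul' : ∀ g h : G, ∀ x ∈ carrier, smul (g * h) x = smul g (smul h x)
  continuousOn_smul' : ContinuousOn (fun p : G × E => smul p.1 p.2) (Set.univ ×ˢ carrier)
  smul_affine' : ∀ g : G, ∀ x ∈ carrier, ∀ y ∈ carrier, ∀ t : ℝ, 0 ≤ t → t ≤ 1 →
    smul g (t • x + (1 - t) • y) = t • smul g x + (1 - t) • smul g y

attribute [instance] AffineFlow.instAddCommGroup AffineFlow.instModule
  AffineFlow.instTopologicalSpace AffineFlow.instT2Space AffineFlow.instTopologicalAddGroup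
  AffineFlow.instContinuousSMul AffineFlow.instLocallyConvexSpace

/-- An affine `G`-map between affine `G`-flows: a continuous affine `G`-equivariant map
(recorded on the ambient spaces, with all conditions on the carriers). -/
def IsAffineGMap {G : Type u} [Group G] [TopologicalSpace G] [IsTopologicalGroup G]
    (K : AffineFlow.{u, v} G) (L : AffineFlow.{u, w} G) (f : K.E → L.E) : Prop :=
  Set.MapsTo f K.carrier L.carrier ∧ ContinuousOn f K.carrier ∧
    (∀ g : G, ∀ x ∈ K.carrier, f (K.smul g x) = L.smul g (f x)) ∧
    ∀ x ∈ K.carrier, ∀ y ∈ K.carrier, ∀ t : ℝ, 0 ≤ t → t ≤ 1 →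
      f (t • x + (1 - t) • y) = t • f x + (1 - t) • f y

/-- An affine extension: a surjective affine `G`-map. -/
def IsAffineExtension {G : Type u} [Group G] [TopologicalSpace G] [IsTopologicalGroup G]
    (K : AffineFlow.{u, v} G) (L : AffineFlow.{u, w} G) (f : K.E → L.E) : Prop :=
  IsAffineGMap K L f ∧ f '' K.carrier = L.carrier

/-- An affine subflow: a nonempty closed convex `G`-invariant subset. -/
def AffineFlow.IsAffineSubflow {G : Type u} [Group G] [TopologicalSpace G] [IsTopologicalGroup G]
    (K : AffineFlow.{u, v} G) (C : Set K.E) : Prop :=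
  C.Nonempty ∧ C ⊆ K.carrier ∧ IsClosed C ∧ Convex ℝ C ∧ ∀ g : G, ∀ x ∈ C, K.smul g x ∈ C

/-- An affine extension `f : K → L` is affine `G`-irreducible if no proper affine subflow
of `K` maps onto `L`. -/
def IsAffineIrreducibleExt {G : Type u} [Group G] [TopologicalSpace G] [IsTopologicalGroup G]
    (K : AffineFlow.{u, v} G) (L : AffineFlow.{u, w} G) (f : K.E → L.E) : Prop :=
  IsAffineExtension K L f ∧
    ∀ C : Set K.E, K.IsAffineSubflow C → C ≠ K.carrier → f '' C ≠ L.carrier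

/-- An affine extension `f : K → L` is proximally irreducible if the only affine subflow
`C` of `K` meeting `conv (cl (ext K) ∩ f ⁻¹' {y})` for every `y ∈ cl (ext L)` is `K` itself. -/
def IsProximallyIrreducibleExt {G : Type u} [Group G] [TopologicalSpace G] [IsTopologicalGroup G]
    (K : AffineFlow.{u, v} G) (L : AffineFlow.{u, w} G) (f : K.E → L.E) : Prop :=
  IsAffineExtension K L f ∧
    ∀ C : Set K.E, K.IsAffineSubflow C →
      (∀ y ∈ closure (L.carrier.extremePoints ℝ),
        (C ∩ convexHull ℝ (closure (K.carrier.extremePoints ℝ) ∩ f ⁻¹' {y})).Nonempty) →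
      C = K.carrier

/-!
Every extreme point of `K` lifts to an extreme point of `L` (an extreme point of a compact fibre
of `f` is extreme in `L`). Hence, for a closed `G`-invariant `B ⊆ L` whose image contains
`ext K`, the closed convex hull of `B` is an affine subflow mapping onto
`K = cl conv (ext K)`, so by irreducibility it is all of `L`. Milman's converse to the
Krein–Milman theorem then gives `ext L ⊆ B`, i.e. `cl (ext L) ⊆ B`. Applied to
`B = cl (ext L) ∩ f⁻¹ (cl (ext K))` this proves that `f` maps `cl (ext L)` onto `cl (ext K)`;
applied to a subflow `C` of `cl (ext L)` with `f C = cl (ext K)` it proves `C = cl (ext L)`.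
-/

open Set Topology Pointwise

section

variable {E F : Type*} [AddCommGroup E] [Module ℝ E] [AddCommGroup F] [Module ℝ F]

def AffineOn (s : Set E) (f : E → F) : Prop :=
  ∀ x ∈ s, ∀ y ∈ s, ∀ t : ℝ, 0 ≤ t → t ≤ 1 → f (t • x + (1 - t) • y) = t • f x + (1 - t) • f y

namespace AffineOn

variable {s : Set E} {f : E → F}

lemma mapsTo_openSegment (hf : AffineOn s f) {x y : E} (hx : x ∈ s) (hy : y ∈ s) :
    MapsTo f (openSegment ℝ x y) (openSegment ℝ (f x) (f y)) := by
  rintro _ ⟨a, b, ha, hb, hab, rfl⟩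
  obtain rfl : b = 1 - a := by linarith
  exact ⟨a, 1 - a, ha, hb, hab, (hf x hx y hy a ha.le (by linarith)).symm⟩

lemma convex_image (hf : AffineOn s f) {C : Set E} (hCs : C ⊆ s) (hC : Convex ℝ C) :
    Convex ℝ (f '' C) := by
  rintro _ ⟨x, hx, rfl⟩ _ ⟨y, hy, rfl⟩ a b ha hb hab
  obtain rfl : b = 1 - a := by linarith
  exact ⟨a • x + (1 - a) • y, hC hx hy ha hb hab, hf x (hCs hx) y (hCs hy) a ha (by linarith)⟩

lemma convex_inter_preimage (hf : AffineOn s f) (hs : Convex ℝ s) {t : Set F}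
    (ht : Convex ℝ t) : Convex ℝ (s ∩ f ⁻¹' t) := by
  intro x hx y hy a b ha hb hab
  obtain rfl : b = 1 - a := by linarith
  refine ⟨hs hx.1 hy.1 ha hb hab, ?_⟩
  rw [mem_preimage, hf x hx.1 y hy.1 a ha (by linarith)]
  exact ht hx.2 hy.2 ha hb hab

lemma image_convexHull_subset (hf : AffineOn s f) (hs : Convex ℝ s) {B : Set E} (hB : B ⊆ s) :
    f '' convexHull ℝ B ⊆ convexHull ℝ (f '' B) := by
  have : convexHull ℝ B ⊆ s ∩ f ⁻¹' convexHull ℝ (f '' B) :=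
    convexHull_min (fun x hx => ⟨hB hx, subset_convexHull ℝ _ (mem_image_of_mem f hx)⟩)
      (hf.convex_inter_preimage hs (convex_convexHull ℝ _))
  exact image_subset_iff.2 fun x hx => (this hx).2

lemma surjOn_extremePoints_image [TopologicalSpace E] [T2Space E] [IsTopologicalAddGroup E]
    [ContinuousSMul ℝ E] [LocallyConvexSpace ℝ E] [TopologicalSpace F] [T1Space F]
    (hf : AffineOn s f) (hcont : ContinuousOn f s) (hs : IsCompact s) :
    SurjOn f (s.extremePoints ℝ) ((f '' s).extremePoints ℝ) := by
  rintro y hy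
  obtain ⟨x₀, hx₀, rfl⟩ := extremePoints_subset hy
  have hfibre : IsCompact (s ∩ f ⁻¹' {f x₀}) :=
    hs.of_isClosed_subset (hcont.preimage_isClosed_of_isClosed hs.isClosed isClosed_singleton)
      inter_subset_left
  obtain ⟨x, ⟨hxs, hxy⟩, hxe⟩ := hfibre.extremePoints_nonempty ⟨x₀, hx₀, rfl⟩
  refine ⟨x, ⟨hxs, fun x₁ hx₁ x₂ hx₂ hx => ?_⟩, hxy⟩
  have hfx : f x = f x₀ := hxy
  obtain ⟨h₁, h₂⟩ := (mem_extremePoints.1 hy).2 _ (mem_image_of_mem f hx₁) _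
    (mem_image_of_mem f hx₂) (hfx ▸ hf.mapsTo_openSegment hx₁ hx₂ hx)
  exact hxe ⟨hx₁, h₁⟩ ⟨hx₂, h₂⟩ hx

end AffineOn

end

section Milman

variable {E : Type*} [AddCommGroup E] [Module ℝ E] [TopologicalSpace E]
  [IsTopologicalAddGroup E] [ContinuousSMul ℝ E]

lemma isCompact_convexJoin {s t : Set E} (hs : IsCompact s) (ht : IsCompact t) :
    IsCompact (convexJoin ℝ s t) := by
  have : convexJoin ℝ s t =
      (fun p : ℝ × E × E => (1 - p.1) • p.2.1 + p.1 • p.2.2) '' (Icc 0 1 ×ˢ s ×ˢ t) := by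
    ext z
    simp only [mem_convexJoin, segment_eq_image, mem_image, Prod.exists, mem_prod]
    constructor
    · rintro ⟨a, ha, b, hb, θ, hθ, rfl⟩
      exact ⟨θ, a, b, ⟨hθ, ha, hb⟩, rfl⟩
    · rintro ⟨θ, a, b, ⟨hθ, ha, hb⟩, rfl⟩
      exact ⟨a, ha, b, hb, θ, hθ, rfl⟩
  rw [this]
  exact (isCompact_Icc.prod (hs.prod ht)).image (by fun_prop)

lemma IsCompact.convexHull_union {s t : Set E} (hs : IsCompact s) (hsc : Convex ℝ s)
    (ht : IsCompact (convexHull ℝ t)) : IsCompact (convexHull ℝ (s ∪ t)) := by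
  rcases s.eq_empty_or_nonempty with rfl | hs₀
  · rwa [empty_union]
  rcases t.eq_empty_or_nonempty with rfl | ht₀
  · rwa [union_empty, hsc.convexHull_eq]
  rw [← convexHull_convexHull_union_right, hsc.convexHull_union (convex_convexHull ℝ t) hs₀
    ht₀.convexHull]
  exact isCompact_convexJoin hs ht

lemma isCompact_convexHull_biUnion {ι : Type*} (I : Finset ι) {K : ι → Set E}
    (hK : ∀ i ∈ I, IsCompact (K i)) (hKc : ∀ i ∈ I, Convex ℝ (K i)) :
    IsCompact (convexHull ℝ (⋃ i ∈ I, K i)) := by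
  classical
  induction I using Finset.induction_on with
  | empty => simp
  | insert a I _ ih =>
    rw [Finset.set_biUnion_insert]
    exact (hK a (I.mem_insert_self a)).convexHull_union (hKc a (I.mem_insert_self a))
      (ih (fun i hi => hK i (Finset.mem_insert_of_mem hi))
        fun i hi => hKc i (Finset.mem_insert_of_mem hi))

variable [LocallyConvexSpace ℝ E]

lemma exists_isClosed_convex_mem_nhds_zero_subset {U : Set E} (hU : U ∈ 𝓝 (0 : E)) :
    ∃ V ∈ 𝓝 (0 : E), IsClosed V ∧ Convex ℝ V ∧ V ⊆ U := by
  obtain ⟨W, hW, hWcl, hWU⟩ := exists_mem_nhds_isClosed_subset hU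
  obtain ⟨V, ⟨hV, hVc⟩, hVW⟩ := (LocallyConvexSpace.convex_basis_zero ℝ E).mem_iff.1 hW
  exact ⟨closure V, Filter.mem_of_superset hV subset_closure, isClosed_closure, hVc.closure,
    (closure_minimal hVW hWcl).trans hWU⟩

/-- **Milman's theorem**. -/
theorem extremePoints_closure_convexHull_subset [T2Space E] {t : Set E} (ht : IsCompact t)
    (hK : IsCompact (closure (convexHull ℝ t))) :
    (closure (convexHull ℝ t)).extremePoints ℝ ⊆ t := by
  intro x hx
  by_contra hxt
  obtain ⟨V₀, hV₀, htV₀⟩ := compact_open_separated_add_right ht isOpen_compl_singleton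
    (subset_compl_singleton_iff.2 hxt)
  obtain ⟨V, hV, hVcl, hVc, hVV₀⟩ := exists_isClosed_convex_mem_nhds_zero_subset hV₀
  obtain ⟨I, hIt, hcover⟩ := ht.elim_nhds_subcover (fun y => y +ᵥ V) fun y _ => by
    simpa using hV
  -- `x` is extreme in the compact convex hull of finitely many small closed convex pieces
  set P : E → Set E := fun y => closure (convexHull ℝ (t ∩ (y +ᵥ V)))
  have hP : ∀ y, P y ⊆ closure (convexHull ℝ t) :=
    fun y => closure_mono (convexHull_mono inter_subset_left)
  have hPV : ∀ y, P y ⊆ y +ᵥ V :=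
    fun y => closure_minimal (convexHull_min inter_subset_right (hVc.vadd y)) (hVcl.vadd y)
  have hM : convexHull ℝ (⋃ y ∈ I, P y) = closure (convexHull ℝ t) := by
    refine (convexHull_min (iUnion₂_subset fun y _ => hP y)
      (convex_convexHull ℝ t).closure).antisymm (closure_minimal (convexHull_mono fun z hz => ?_)
      (isCompact_convexHull_biUnion I (fun y _ => hK.of_isClosed_subset isClosed_closure (hP y))
        fun y _ => (convex_convexHull ℝ _).closure).isClosed)
    obtain ⟨y, hyI, hzy⟩ := mem_iUnion₂.1 (hcover hz)
    exact mem_iUnion₂.2 ⟨y, hyI, subset_closure (subset_convexHull ℝ _ ⟨hz, hzy⟩)⟩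
  rw [← hM] at hx
  obtain ⟨y, hyI, hxy⟩ := mem_iUnion₂.1 (extremePoints_convexHull_subset hx)
  exact htV₀ (add_subset_add_left hVV₀ (vadd_set_subset_add (hIt y hyI) (hPV y hxy))) rfl

end Milman

namespace AffineFlow

variable {G : Type u} [Group G] [TopologicalSpace G] [IsTopologicalGroup G]
  (M : AffineFlow.{u, v} G)

lemma affineOn_smul (g : G) : AffineOn M.carrier (M.smul g) := M.smul_affine' g

lemma continuousOn_smul (g : G) : ContinuousOn (M.smul g) M.carrier :=
  M.continuousOn_smul'.comp (Continuous.prodMk_right g).continuousOn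
    fun _ hx => ⟨mem_univ g, hx⟩

lemma smul_inv_smul (g : G) {x : M.E} (hx : x ∈ M.carrier) : M.smul g⁻¹ (M.smul g x) = x := by
  rw [← M.mul_smul' g⁻¹ g x hx, inv_mul_cancel, M.one_smul' x hx]

lemma smul_mem_extremePoints (g : G) {x : M.E} (hx : x ∈ M.carrier.extremePoints ℝ) :
    M.smul g x ∈ M.carrier.extremePoints ℝ := by
  refine ⟨M.smul_mem' g x hx.1, fun x₁ hx₁ x₂ hx₂ hgx => ?_⟩
  have := (M.affineOn_smul g⁻¹).mapsTo_openSegment hx₁ hx₂ hgx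
  rw [M.smul_inv_smul g hx.1] at this
  rw [← hx.2 (M.smul_mem' g⁻¹ x₁ hx₁) (M.smul_mem' g⁻¹ x₂ hx₂) this, ← M.mul_smul' g g⁻¹ x₁ hx₁,
    mul_inv_cancel, M.one_smul' x₁ hx₁]

lemma closure_extremePoints_subset : closure (M.carrier.extremePoints ℝ) ⊆ M.carrier :=
  closure_minimal extremePoints_subset M.isCompact'.isClosed

lemma smul_mem_closure_extremePoints (g : G) {x : M.E}
    (hx : x ∈ closure (M.carrier.extremePoints ℝ)) :
    M.smul g x ∈ closure (M.carrier.extremePoints ℝ) :=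
  (MapsTo.closure_of_continuousOn (fun _ => M.smul_mem_extremePoints g)
    ((M.continuousOn_smul g).mono M.closure_extremePoints_subset)) hx

lemma isAffineSubflow_closure_convexHull {B : Set M.E} (hB₀ : B.Nonempty) (hB : B ⊆ M.carrier)
    (hBinv : ∀ g : G, ∀ x ∈ B, M.smul g x ∈ B) :
    M.IsAffineSubflow (closure (convexHull ℝ B)) := by
  have hcl : closure (convexHull ℝ B) ⊆ M.carrier :=
    closure_minimal (convexHull_min hB M.convex') M.isCompact'.isClosed
  refine ⟨hB₀.convexHull.closure, hcl, isClosed_closure, (convex_convexHull ℝ B).closure,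
    fun g => ?_⟩
  refine MapsTo.closure_of_continuousOn (fun x hx => ?_) ((M.continuousOn_smul g).mono hcl)
  exact convexHull_mono (image_subset_iff.2 (hBinv g))
    ((M.affineOn_smul g).image_convexHull_subset M.convex' hB (mem_image_of_mem _ hx))

end AffineFlow

section Extension

variable {G : Type u} [Group G] [TopologicalSpace G] [IsTopologicalGroup G]
  {L : AffineFlow.{u, v} G} {K : AffineFlow.{u, w} G} {f : L.E → K.E}

lemma IsAffineGMap.continuousOn (hf : IsAffineGMap L K f) : ContinuousOn f L.carrier :=
  hf.2.1

lemma IsAffineGMap.map_smul (hf : IsAffineGMap L K f) (g : G) {x : L.E} (hx : x ∈ L.carrier) :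
    f (L.smul g x) = K.smul g (f x) :=
  hf.2.2.1 g x hx

lemma IsAffineGMap.affineOn (hf : IsAffineGMap L K f) : AffineOn L.carrier f :=
  hf.2.2.2

lemma IsAffineExtension.extremePoints_subset_image (hf : IsAffineExtension L K f) :
    K.carrier.extremePoints ℝ ⊆ f '' L.carrier.extremePoints ℝ := by
  have := hf.1.affineOn.surjOn_extremePoints_image hf.1.continuousOn L.isCompact'
  rwa [hf.2] at this

lemma IsAffineExtension.image_closure_convexHull {B : Set L.E} (hf : IsAffineExtension L K f)
    (hB : B ⊆ L.carrier) (hKB : K.carrier.extremePoints ℝ ⊆ f '' B) :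
    f '' closure (convexHull ℝ B) = K.carrier := by
  have hcl : closure (convexHull ℝ B) ⊆ L.carrier :=
    closure_minimal (convexHull_min hB L.convex') L.isCompact'.isClosed
  refine (hf.2 ▸ image_mono hcl).antisymm ?_
  have hcomp : IsCompact (f '' closure (convexHull ℝ B)) :=
    (L.isCompact'.of_isClosed_subset isClosed_closure hcl).image_of_continuousOn
      (hf.1.continuousOn.mono hcl)
  have hconv : Convex ℝ (f '' closure (convexHull ℝ B)) :=
    hf.1.affineOn.convex_image hcl (convex_convexHull ℝ B).closure
  have hext : K.carrier.extremePoints ℝ ⊆ f '' closure (convexHull ℝ B) :=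
    hKB.trans (image_mono ((subset_convexHull ℝ B).trans subset_closure))
  calc K.carrier = closure (convexHull ℝ (K.carrier.extremePoints ℝ)) :=
        (closure_convexHull_extremePoints K.isCompact' K.convex').symm
    _ ⊆ f '' closure (convexHull ℝ B) :=
        closure_minimal (convexHull_min hext hconv) hcomp.isClosed

lemma IsAffineIrreducibleExt.closure_extremePoints_subset (hf : IsAffineIrreducibleExt L K f)
    {B : Set L.E} (hBcl : IsClosed B) (hB : B ⊆ L.carrier)
    (hBinv : ∀ g : G, ∀ x ∈ B, L.smul g x ∈ B) (hKB : K.carrier.extremePoints ℝ ⊆ f '' B) :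
    closure (L.carrier.extremePoints ℝ) ⊆ B := by
  have hB₀ : B.Nonempty := ((K.isCompact'.extremePoints_nonempty K.nonempty').mono hKB).of_image
  have hL : closure (convexHull ℝ B) = L.carrier := by
    by_contra hne
    exact hf.2 _ (L.isAffineSubflow_closure_convexHull hB₀ hB hBinv) hne
      (hf.1.image_closure_convexHull hB hKB)
  have hmilman := extremePoints_closure_convexHull_subset
    (L.isCompact'.of_isClosed_subset hBcl hB) (hL ▸ L.isCompact')
  rw [hL] at hmilman
  exact closure_minimal hmilman hBcl

lemma IsAffineExtension.closure_extremePoints_subset_image (hf : IsAffineExtension L K f) :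
    closure (K.carrier.extremePoints ℝ) ⊆ f '' closure (L.carrier.extremePoints ℝ) :=
  closure_minimal (hf.extremePoints_subset_image.trans (image_mono subset_closure))
    ((L.isCompact'.of_isClosed_subset isClosed_closure
      L.closure_extremePoints_subset).image_of_continuousOn
        (hf.1.continuousOn.mono L.closure_extremePoints_subset)).isClosed

lemma IsAffineIrreducibleExt.image_closure_extremePoints (hf : IsAffineIrreducibleExt L K f) :
    f '' closure (L.carrier.extremePoints ℝ) = closure (K.carrier.extremePoints ℝ) := by
  set AL := closure (L.carrier.extremePoints ℝ)
  set AK := closure (K.carrier.extremePoints ℝ)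
  have hAL : AL ⊆ L.carrier := L.closure_extremePoints_subset
  have hBcl : IsClosed (AL ∩ (L.carrier ∩ f ⁻¹' AK)) :=
    isClosed_closure.inter (hf.1.1.continuousOn.preimage_isClosed_of_isClosed
      L.isCompact'.isClosed isClosed_closure)
  have hALB : AL ⊆ AL ∩ (L.carrier ∩ f ⁻¹' AK) := by
    refine hf.closure_extremePoints_subset hBcl (inter_subset_left.trans hAL)
      (fun g x hx => ?_) ?_
    · refine ⟨L.smul_mem_closure_extremePoints g hx.1, L.smul_mem' g x hx.2.1, ?_⟩
      rw [mem_preimage, hf.1.1.map_smul g hx.2.1]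
      exact K.smul_mem_closure_extremePoints g hx.2.2
    · rintro y hy
      obtain ⟨x, hx, rfl⟩ := hf.1.extremePoints_subset_image hy
      exact ⟨x, ⟨subset_closure hx, extremePoints_subset hx, subset_closure hy⟩, rfl⟩
  exact (image_subset_iff.2 fun x hx => (hALB hx).2.2).antisymm
    hf.1.closure_extremePoints_subset_image

end Extension

/-- An affine `G`-irreducible extension restricts to a `G`-irreducible
extension between the closures of the sets of extreme points. -/
theorem statement5 {G : Type u} [Group G] [TopologicalSpace G] [IsTopologicalGroup G]
    (L : AffineFlow.{u, v} G) (K : AffineFlow.{u, w} G) (f : L.E → K.E)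
    (hf : IsAffineIrreducibleExt L K f) :
    f '' closure (L.carrier.extremePoints ℝ) = closure (K.carrier.extremePoints ℝ) ∧
      ∀ C : Set L.E, C.Nonempty → IsClosed C → C ⊆ closure (L.carrier.extremePoints ℝ) →
        (∀ g : G, ∀ x ∈ C, L.smul g x ∈ C) →
        C ≠ closure (L.carrier.extremePoints ℝ) →
        f '' C ≠ closure (K.carrier.extremePoints ℝ) := by
  refine ⟨hf.image_closure_extremePoints, fun C _ hCcl hCAL hCinv hne hfC =>
    hne (hCAL.antisymm ?_)⟩
  exact hf.closure_extremePoints_subset hCcl (hCAL.trans L.closure_extremePoints_subset) hCinv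
    (hfC ▸ subset_closure)
end

section
/- Let G be a Polish group and Y a minimal G-flow. Then there exists a minimal G-flow X and a strongly proximal extension φ: X → Y such that for every minimal G-flow Z and every strongly proximal extension ψ: Z → Y, there exists a strongly proximal extension π: X → Z with ψ ∘ π = φ. Moreover, X is unique up to isomorphism of G-flows. -/
universe u v w x

variable {G : Type u} [Group G] [TopologicalSpace G] [IsTopologicalGroup G]

/-- The set of states on `C(X, ℝ)`: continuous positive unital linear functionals, inside
the space of all real functionals on `C(X, ℝ)` with the topology of pointwise
(i.e. weak-*) convergence.  This realizes `P(X)`. -/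
def stateSet (X : Type v) [TopologicalSpace X] : Set (C(X, ℝ) → ℝ) :=
  {μ | IsLinearMap ℝ μ ∧ Continuous μ ∧ (∀ f : C(X, ℝ), (∀ x, 0 ≤ f x) → 0 ≤ μ f) ∧ μ 1 = 1}

/-- The Dirac state at a point. -/
def diracState (X : Type v) [TopologicalSpace X] (x : X) : C(X, ℝ) → ℝ := fun f => f x

/-- The push-forward action of `G` on functionals on `C(X, ℝ)` induced by the action on a
`G`-flow `X`, so that `g • δ_x = δ_{g • x}`. -/
def stateSMul {G : Type u} [Group G] [TopologicalSpace G] [IsTopologicalGroup G]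
    (F : GFlow.{u, v} G) (g : G) (μ : C(F.X, ℝ) → ℝ) : C(F.X, ℝ) → ℝ :=
  fun f => μ (f.comp (ContinuousMap.mk (fun x => g • x) (continuous_const_smul g)))

/-- A functional `μ` on `C(X, ℝ)` is supported on a set `s` if it kills every nonnegative
continuous function vanishing on `s`. -/
def SupportedOn {G : Type u} [Group G] [TopologicalSpace G] [IsTopologicalGroup G]
    (F : GFlow.{u, v} G) (μ : C(F.X, ℝ) → ℝ) (s : Set F.X) : Prop :=
  ∀ f : C(F.X, ℝ), (∀ x, 0 ≤ f x) → (∀ x ∈ s, f x = 0) → μ f = 0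

/-- An extension `φ : X → Y` of `G`-flows is strongly proximal if for every `y ∈ Y` and
every state `μ` on `C(X, ℝ)` supported on the fiber `φ⁻¹({y})`, the weak-* closure of the
`G`-orbit of `μ` contains a Dirac state. -/
def IsStronglyProximalExt {G : Type u} [Group G] [TopologicalSpace G] [IsTopologicalGroup G]
    (F₁ : GFlow.{u, v} G) (F₂ : GFlow.{u, w} G) (φ : F₁.X → F₂.X) : Prop :=
  IsExtension F₁ F₂ φ ∧
    ∀ (y : F₂.X) (μ : C(F₁.X, ℝ) → ℝ), μ ∈ stateSet F₁.X → SupportedOn F₁ μ (φ ⁻¹' {y}) →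
      ∃ x : F₁.X, diracState F₁.X x ∈
        closure {ν : C(F₁.X, ℝ) → ℝ | ∃ g : G, ν = stateSMul F₁ g μ}

/-!
The universal extension is a minimal subflow of the fibre product over `Y` of a set of strongly
proximal extensions of `Y` containing a copy of each minimal one. Such a set exists because `G` is
separable: a minimal flow is then separable, so it embeds into `ℝ ^ (ℕ → ℝ)`.

An extension that factors through a family of strongly proximal extensions whose projections
jointly separate its fibres is strongly proximal. Orbit closures of states are compact, so a state
on a fibre can be pushed within its orbit closure, one factor at a time and then in the limit, to a
state whose images in all factors are Dirac; such a state is Dirac.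

Uniqueness is rigidity: if `e` is a self-map over `Y` of a strongly proximal extension, strong
proximality applied to the midpoint of `δ x` and `δ (e x)` yields a fixed point of `e`, so `e` is
the identity when the flow is minimal.
-/

open Set Function

section States

variable {X : Type*} [TopologicalSpace X] {μ : C(X, ℝ) → ℝ}

theorem abs_apply_le_norm_of_isLinearMap [CompactSpace X] (hlin : IsLinearMap ℝ μ)
    (hpos : ∀ f : C(X, ℝ), (∀ x, 0 ≤ f x) → 0 ≤ μ f) (hone : μ 1 = 1) (f : C(X, ℝ)) :
    |μ f| ≤ ‖f‖ := by
  let L := IsLinearMap.mk' μ hlin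
  have bound : ∀ h : C(X, ℝ), (∀ x, h x ≤ ‖f‖) → μ h ≤ ‖f‖ := fun h hh => by
    have hnn := hpos (‖f‖ • 1 - h) fun x => by simpa using hh x
    have : μ (‖f‖ • 1 - h) = ‖f‖ - μ h := calc
      μ (‖f‖ • 1 - h) = ‖f‖ * L 1 - L h := by rw [← IsLinearMap.mk'_apply hlin, map_sub, map_smul,
        smul_eq_mul]
      _ = ‖f‖ - μ h := by simp [L, hone]
    linarith
  have hf : ∀ x, |f x| ≤ ‖f‖ := fun x => by simpa using f.norm_coe_le_norm x
  have h₁ := bound f fun x => (abs_le.1 (hf x)).2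
  have h₂ := bound (-f) fun x => by simpa [neg_le] using (abs_le.1 (hf x)).1
  rw [show μ (-f) = -μ f from L.map_neg f] at h₂
  exact abs_le.2 ⟨by linarith, h₁⟩

theorem mem_stateSet_iff [CompactSpace X] : μ ∈ stateSet X ↔
    IsLinearMap ℝ μ ∧ (∀ f : C(X, ℝ), (∀ x, 0 ≤ f x) → 0 ≤ μ f) ∧ μ 1 = 1 := by
  refine ⟨fun h => ⟨h.1, h.2.2⟩, fun ⟨hlin, hpos, hone⟩ => ⟨hlin, ?_, hpos, hone⟩⟩
  exact AddMonoidHomClass.continuous_of_bound (IsLinearMap.mk' μ hlin) 1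
    fun f => by simpa using abs_apply_le_norm_of_isLinearMap hlin hpos hone f

theorem state_map_sub (hμ : μ ∈ stateSet X) (f₁ f₂ : C(X, ℝ)) : μ (f₁ - f₂) = μ f₁ - μ f₂ :=
  (IsLinearMap.mk' μ hμ.1).map_sub f₁ f₂

theorem state_map_neg (hμ : μ ∈ stateSet X) (f : C(X, ℝ)) : μ (-f) = -μ f :=
  (IsLinearMap.mk' μ hμ.1).map_neg f

theorem state_mono (hμ : μ ∈ stateSet X) {f₁ f₂ : C(X, ℝ)} (h : ∀ x, f₁ x ≤ f₂ x) :
    μ f₁ ≤ μ f₂ := by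
  have := hμ.2.2.1 (f₂ - f₁) fun x => by simpa using h x
  linarith [state_map_sub hμ f₂ f₁]

theorem state_const (hμ : μ ∈ stateSet X) (c : ℝ) : μ (ContinuousMap.const X c) = c := by
  rw [show ContinuousMap.const X c = c • (1 : C(X, ℝ)) by ext; simp, hμ.1.map_smul, hμ.2.2.2,
    smul_eq_mul, mul_one]

theorem isClosed_stateSet [CompactSpace X] : IsClosed (stateSet X) := by
  have hlin : {μ : C(X, ℝ) → ℝ | IsLinearMap ℝ μ} = range ((↑) : (C(X, ℝ) →ₗ[ℝ] ℝ) → _) :=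
    Set.ext fun μ => ⟨fun h => ⟨IsLinearMap.mk' μ h, rfl⟩, fun ⟨L, hL⟩ => hL ▸ L.isLinear⟩
  have hpos : IsClosed {μ : C(X, ℝ) → ℝ | ∀ f : C(X, ℝ), (∀ x, 0 ≤ f x) → 0 ≤ μ f} := by
    simp only [ofPred_forall]
    exact isClosed_iInter fun f => isClosed_iInter fun _ =>
      isClosed_le continuous_const (continuous_apply f)
  have : stateSet X = {μ | IsLinearMap ℝ μ} ∩
      {μ | ∀ f : C(X, ℝ), (∀ x, 0 ≤ f x) → 0 ≤ μ f} ∩ {μ | μ 1 = 1} := by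
    ext μ; simp only [mem_stateSet_iff, mem_inter_iff, mem_ofPred_eq, and_assoc]
  rw [this, hlin]
  exact ((LinearMap.isClosed_range_coe _ _ _).inter hpos).inter
    (isClosed_eq (continuous_apply 1) continuous_const)

theorem isCompact_stateSet [CompactSpace X] : IsCompact (stateSet X) :=
  (isCompact_univ_pi fun f : C(X, ℝ) => isCompact_Icc (a := -‖f‖) (b := ‖f‖)).of_isClosed_subset
    isClosed_stateSet fun _ hμ f _ => abs_le.1 (abs_apply_le_norm_of_isLinearMap hμ.1 hμ.2.2.1
      hμ.2.2.2 f)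

theorem continuous_diracState : Continuous (diracState X) :=
  continuous_pi fun f => f.continuous

theorem isClosed_range_diracState [CompactSpace X] [T2Space X] :
    IsClosed (range (diracState X)) :=
  (isCompact_range continuous_diracState).isClosed

end States

section PushState

variable {X Y : Type*} [TopologicalSpace X] [TopologicalSpace Y]

def pushState (π : C(X, Y)) (μ : C(X, ℝ) → ℝ) : C(Y, ℝ) → ℝ := fun f => μ (f.comp π)

theorem continuous_pushState (π : C(X, Y)) : Continuous (pushState π) :=
  continuous_pi fun f => continuous_apply (f.comp π)

theorem pushState_diracState (π : C(X, Y)) (x : X) :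
    pushState π (diracState X x) = diracState Y (π x) := rfl

theorem pushState_mem_stateSet [CompactSpace Y] (π : C(X, Y)) {μ : C(X, ℝ) → ℝ}
    (hμ : μ ∈ stateSet X) : pushState π μ ∈ stateSet Y :=
  mem_stateSet_iff.2 ⟨⟨fun a b => hμ.1.map_add (a.comp π) (b.comp π),
    fun c f => hμ.1.map_smul c (f.comp π)⟩, fun _ hf => hμ.2.2.1 _ fun _ => hf _, hμ.2.2.2⟩

end PushState

section Flows

variable {F : GFlow.{u, v} G}

theorem IsGMap.comp {F₁ : GFlow.{u, v} G} {F₂ : GFlow.{u, w} G} {F₃ : GFlow.{u, x} G}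
    {f : F₁.X → F₂.X} {f' : F₂.X → F₃.X} (hf' : IsGMap F₂ F₃ f') (hf : IsGMap F₁ F₂ f) :
    IsGMap F₁ F₃ (f' ∘ f) :=
  ⟨hf'.1.comp hf.1, fun g x => by simp only [comp_apply, hf.2, hf'.2]⟩

def IsGMap.toContinuousMap {F₁ : GFlow.{u, v} G} {F₂ : GFlow.{u, w} G} {f : F₁.X → F₂.X}
    (hf : IsGMap F₁ F₂ f) : C(F₁.X, F₂.X) :=
  ⟨f, hf.1⟩

theorem IsGMap.eq_self_of_apply_eq_self (hF : F.IsMinimal) {e : F.X → F.X} (he : IsGMap F F e)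
    {z : F.X} (hz : e z = z) (x : F.X) : e x = x := by
  have hfix : IsSubflow F {x | e x = x} :=
    ⟨⟨z, hz⟩, isClosed_eq he.1 continuous_id, fun g x hx => (he.2 g x).trans (congrArg _ hx)⟩
  exact eq_univ_iff_forall.1 (hF _ hfix) x

theorem IsSubflow.exists_minimal {C : Set F.X} (hC : IsSubflow F C) :
    ∃ M ⊆ C, Minimal (IsSubflow F) M := by
  refine zorn_superset_nonempty {N | IsSubflow F N}
    (fun c hc hchain hne => ⟨⋂₀ c, ⟨?_, ?_, ?_⟩, fun _ => sInter_subset_of_mem⟩) C hC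
  · have : Nonempty c := hne.to_subtype
    refine IsCompact.nonempty_sInter_of_directed_nonempty_isCompact_isClosed (fun a ha b hb => ?_)
      (fun N hN => (hc hN).1) (fun N hN => (hc hN).2.1.isCompact) fun N hN => (hc hN).2.1
    exact (hchain.total ha hb).elim (fun h => ⟨a, ha, le_rfl, h⟩) fun h => ⟨b, hb, h, le_rfl⟩
  · exact isClosed_sInter fun N hN => (hc hN).2.1
  · exact fun g x hx => mem_sInter.2 fun N hN => (hc hN).2.2 g x (mem_sInter.1 hx N hN)

def GFlow.sub (F : GFlow.{u, v} G) {M : Set F.X} (hM : IsSubflow F M) : GFlow.{u, v} G :=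
  letI : MulAction G M :=
    { smul g x := ⟨g • x.1, hM.2.2 g x.1 x.2⟩
      one_smul x := Subtype.ext (one_smul G x.1)
      mul_smul g h x := Subtype.ext (mul_smul g h x.1) }
  haveI : CompactSpace M := isCompact_iff_compactSpace.mp hM.2.1.isCompact
  haveI : Nonempty M := hM.1.to_subtype
  haveI : ContinuousSMul G M :=
    ⟨(continuous_fst.smul (continuous_subtype_val.comp continuous_snd)).subtype_mk _⟩
  { X := M }

theorem GFlow.isMinimal_sub {M : Set F.X} (hM : Minimal (IsSubflow F) M) :
    (F.sub hM.1).IsMinimal := by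
  intro C hC
  have hC' : IsSubflow F (Subtype.val '' C) :=
    ⟨hC.1.image _, (hC.2.1.isCompact.image continuous_subtype_val).isClosed,
      by rintro g _ ⟨x, hx, rfl⟩; exact ⟨_, hC.2.2 g x hx, rfl⟩⟩
  have hCM := hM.eq_of_subset hC' (image_subset_iff.2 fun x _ => x.2)
  exact eq_univ_of_forall fun x => by
    obtain ⟨y, hy, hyx⟩ := hCM.symm.subset x.2
    rwa [← Subtype.ext hyx]

theorem IsGMap.surjective_of_isMinimal {F' : GFlow.{u, w} G} {f : F.X → F'.X}
    (hf : IsGMap F F' f) (hF' : F'.IsMinimal) : Surjective f := by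
  have hrange : IsSubflow F' (range f) :=
    ⟨range_nonempty f, (isCompact_range hf.1).isClosed,
      by rintro g _ ⟨x, rfl⟩; exact ⟨g • x, hf.2 g x⟩⟩
  exact eq_univ_iff_forall.1 (hF' _ hrange)

theorem GFlow.IsMinimal.denseRange_smul (hF : F.IsMinimal) (x : F.X) :
    DenseRange fun g : G => g • x := by
  refine dense_iff_closure_eq.2 (hF _ ⟨⟨x, subset_closure ⟨1, one_smul G x⟩⟩, isClosed_closure,
    fun g y hy => ?_⟩)
  refine closure_mono ?_ (image_closure_subset_closure_image (continuous_const_smul g) ⟨y, hy, rfl⟩)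
  rintro _ ⟨_, ⟨h, rfl⟩, rfl⟩
  exact ⟨g * h, mul_smul g h x⟩

end Flows

section StateAction

variable {F : GFlow.{u, v} G} {μ ν : C(F.X, ℝ) → ℝ}

theorem stateSMul_mem_stateSet (g : G) (hμ : μ ∈ stateSet F.X) : stateSMul F g μ ∈ stateSet F.X :=
  pushState_mem_stateSet _ hμ

theorem continuous_stateSMul (F : GFlow.{u, v} G) (g : G) : Continuous (stateSMul F g) :=
  continuous_pushState _

theorem stateSMul_one (μ : C(F.X, ℝ) → ℝ) : stateSMul F 1 μ = μ := by
  funext f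
  exact congrArg μ (ContinuousMap.ext fun x => congrArg f (one_smul G x))

theorem stateSMul_stateSMul (g h : G) (μ : C(F.X, ℝ) → ℝ) :
    stateSMul F g (stateSMul F h μ) = stateSMul F (g * h) μ := by
  funext f
  exact congrArg μ (ContinuousMap.ext fun x => congrArg f (mul_smul g h x).symm)

theorem stateSMul_diracState (g : G) (x : F.X) :
    stateSMul F g (diracState F.X x) = diracState F.X (g • x) := rfl

theorem IsGMap.pushState_stateSMul {F₁ : GFlow.{u, v} G} {F₂ : GFlow.{u, w} G}
    {f : F₁.X → F₂.X} (hf : IsGMap F₁ F₂ f) (g : G) (μ : C(F₁.X, ℝ) → ℝ) :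
    pushState hf.toContinuousMap (stateSMul F₁ g μ) =
      stateSMul F₂ g (pushState hf.toContinuousMap μ) := by
  funext k
  exact congrArg μ (ContinuousMap.ext fun x => congrArg k (hf.2 g x))

def stateOrbit (F : GFlow.{u, v} G) (μ : C(F.X, ℝ) → ℝ) : Set (C(F.X, ℝ) → ℝ) :=
  {ν | ∃ g : G, ν = stateSMul F g μ}

theorem self_mem_closure_stateOrbit (μ : C(F.X, ℝ) → ℝ) : μ ∈ closure (stateOrbit F μ) :=
  subset_closure ⟨1, (stateSMul_one μ).symm⟩

theorem closure_stateOrbit_subset {S : Set (C(F.X, ℝ) → ℝ)} (hS : IsClosed S)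
    (hSinv : ∀ g : G, ∀ ν ∈ S, stateSMul F g ν ∈ S) (hμ : μ ∈ S) :
    closure (stateOrbit F μ) ⊆ S :=
  closure_minimal (by rintro _ ⟨g, rfl⟩; exact hSinv g μ hμ) hS

theorem stateSMul_mem_closure_stateOrbit (g : G) (hν : ν ∈ closure (stateOrbit F μ)) :
    stateSMul F g ν ∈ closure (stateOrbit F μ) := by
  have hsub : stateSMul F g '' stateOrbit F μ ⊆ stateOrbit F μ := by
    rintro _ ⟨_, ⟨h, rfl⟩, rfl⟩
    exact ⟨g * h, stateSMul_stateSMul g h μ⟩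
  exact closure_mono hsub
    (image_closure_subset_closure_image (continuous_stateSMul F g) ⟨ν, hν, rfl⟩)

theorem closure_stateOrbit_subset_stateSet (hμ : μ ∈ stateSet F.X) :
    closure (stateOrbit F μ) ⊆ stateSet F.X :=
  closure_stateOrbit_subset isClosed_stateSet (fun g _ hν => stateSMul_mem_stateSet g hν) hμ

theorem isCompact_closure_stateOrbit (hμ : μ ∈ stateSet F.X) :
    IsCompact (closure (stateOrbit F μ)) :=
  isCompact_stateSet.of_isClosed_subset isClosed_closure (closure_stateOrbit_subset_stateSet hμ)

theorem IsGMap.image_closure_stateOrbit {F₁ : GFlow.{u, v} G} {F₂ : GFlow.{u, w} G}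
    {f : F₁.X → F₂.X} (hf : IsGMap F₁ F₂ f) {μ : C(F₁.X, ℝ) → ℝ} (hμ : μ ∈ stateSet F₁.X) :
    pushState hf.toContinuousMap '' closure (stateOrbit F₁ μ) =
      closure (stateOrbit F₂ (pushState hf.toContinuousMap μ)) := by
  have hcont := continuous_pushState hf.toContinuousMap
  have horbit : pushState hf.toContinuousMap '' stateOrbit F₁ μ =
      stateOrbit F₂ (pushState hf.toContinuousMap μ) := by
    ext ν
    constructor
    · rintro ⟨_, ⟨g, rfl⟩, rfl⟩
      exact ⟨g, hf.pushState_stateSMul g μ⟩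
    · rintro ⟨g, rfl⟩
      exact ⟨_, ⟨g, rfl⟩, hf.pushState_stateSMul g μ⟩
  rw [← horbit]
  exact subset_antisymm (image_closure_subset_closure_image hcont)
    (closure_minimal (image_mono subset_closure)
      ((isCompact_closure_stateOrbit hμ).image hcont).isClosed)

end StateAction

section Support

variable {F : GFlow.{u, v} G} {μ : C(F.X, ℝ) → ℝ} {A B : Set F.X}

theorem SupportedOn.mono (h : SupportedOn F μ A) (hAB : A ⊆ B) : SupportedOn F μ B :=
  fun f hf hB => h f hf fun x hx => hB x (hAB hx)

theorem SupportedOn.apply_le (hμ : μ ∈ stateSet F.X) (hS : SupportedOn F μ A)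
    {f : C(F.X, ℝ)} {c : ℝ} (h : ∀ x ∈ A, f x ≤ c) : μ f ≤ c := by
  let k : C(F.X, ℝ) := ⟨fun x => max (f x - c) 0, by fun_prop⟩
  have hk : μ k = 0 :=
    hS k (fun x => le_max_right _ _) fun x hx => max_eq_right (sub_nonpos.2 (h x hx))
  have hle : ∀ x, f x ≤ (ContinuousMap.const F.X c + k) x := fun x => by
    have := le_max_left (f x - c) 0
    simp only [ContinuousMap.add_apply, ContinuousMap.const_apply, ContinuousMap.coe_mk, k]
    linarith
  calc μ f ≤ μ (ContinuousMap.const F.X c + k) := state_mono hμ hle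
    _ = c := by rw [hμ.1.map_add, state_const hμ, hk, add_zero]

theorem SupportedOn.eq_diracState (hμ : μ ∈ stateSet F.X) {x : F.X}
    (hS : SupportedOn F μ {x}) : μ = diracState F.X x := by
  funext f
  have h₁ : μ f ≤ f x := hS.apply_le hμ (by simp)
  have h₂ : μ (-f) ≤ -f x := hS.apply_le hμ (by simp)
  rw [state_map_neg hμ] at h₂
  exact le_antisymm h₁ (by simp only [diracState]; linarith)

theorem SupportedOn.exists_eq_diracState (hμ : μ ∈ stateSet F.X) (hS : SupportedOn F μ A)
    (hA : A.Subsingleton) : ∃ x, μ = diracState F.X x := by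
  obtain rfl | ⟨x, rfl⟩ := hA.eq_empty_or_singleton
  · have h := hS 1 (fun _ => zero_le_one) fun _ hx => hx.elim
    rw [hμ.2.2.2] at h
    exact absurd h one_ne_zero
  · exact ⟨x, hS.eq_diracState hμ⟩

theorem SupportedOn.inter (hμ : μ ∈ stateSet F.X) (hA : IsClosed A) (hB : IsClosed B)
    (hSA : SupportedOn F μ A) (hSB : SupportedOn F μ B) : SupportedOn F μ (A ∩ B) := by
  intro f hf hv
  refine le_antisymm (le_of_forall_pos_le_add fun ε hε => ?_) (hμ.2.2.1 f hf)
  -- `u` cuts `f` into a part vanishing on `B` and a part that is `≤ ε` on `A`.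
  obtain ⟨u, hu0, hu1, hu01⟩ := exists_continuous_zero_one_of_isClosed hB
    (hA.inter (isClosed_le continuous_const f.continuous : IsClosed {x | ε ≤ f x}))
    (disjoint_left.2 fun x hxB hx => by linarith [hv x ⟨hx.1, hxB⟩, hx.2.out])
  have h₁ : μ (f * u) = 0 :=
    hSB _ (fun x => mul_nonneg (hf x) (hu01 x).1) fun x hx => by simp [hu0 hx]
  have h₂ : μ (f * (1 - u)) ≤ ε := hSA.apply_le hμ fun x hx => by
    rcases le_or_gt ε (f x) with h | h
    · simp [hu1 ⟨hx, h⟩, hε.le]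
    · simp only [ContinuousMap.mul_apply, ContinuousMap.sub_apply, ContinuousMap.one_apply]
      nlinarith [hf x, (hu01 x).1, (hu01 x).2]
  calc μ f = μ (f * u) + μ (f * (1 - u)) := by rw [← hμ.1.map_add]; congr 1; ring
    _ ≤ 0 + ε := by linarith

theorem SupportedOn.biInter_finset {ι : Type*} {A : ι → Set F.X} (hμ : μ ∈ stateSet F.X)
    (hA : ∀ i, IsClosed (A i)) (hS : ∀ i, SupportedOn F μ (A i)) (s : Finset ι) :
    SupportedOn F μ (⋂ i ∈ s, A i) := by
  classical
  induction s using Finset.induction_on with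
  | empty =>
    intro f _ hv
    rw [show f = 0 from ContinuousMap.ext fun x => hv x (by simp)]
    exact hμ.1.map_zero
  | insert i s _ ih =>
    rw [Finset.set_biInter_insert]
    exact (hS i).inter hμ (hA i) (isClosed_biInter fun j _ => hA j) ih

theorem SupportedOn.iInter {ι : Type*} {A : ι → Set F.X} (hμ : μ ∈ stateSet F.X)
    (hA : ∀ i, IsClosed (A i)) (hS : ∀ i, SupportedOn F μ (A i)) :
    SupportedOn F μ (⋂ i, A i) := by
  intro f hf hv
  refine le_antisymm (le_of_forall_pos_le_add fun ε hε => ?_) (hμ.2.2.1 f hf)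
  have hK : IsClosed {x | ε ≤ f x} := isClosed_le continuous_const f.continuous
  obtain ⟨s, hs⟩ := hK.isCompact.elim_finite_subfamily_closed A hA <|
    eq_empty_iff_forall_notMem.2 fun x ⟨hxε, hx⟩ => by linarith [hv x hx, hxε.out]
  rw [zero_add]
  refine (SupportedOn.biInter_finset hμ hA hS s).apply_le hμ fun x hx => le_of_not_ge fun hxε => ?_
  exact (eq_empty_iff_forall_notMem.1 hs) x ⟨hxε, hx⟩

end Support

section Fibers

variable {F₁ : GFlow.{u, v} G} {F₂ : GFlow.{u, w} G} {μ : C(F₁.X, ℝ) → ℝ}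

theorem SupportedOn.pushState (π : C(F₁.X, F₂.X)) {s : Set F₂.X}
    (h : SupportedOn F₁ μ (π ⁻¹' s)) : SupportedOn F₂ (pushState π μ) s :=
  fun f hf hv => h (f.comp π) (fun _ => hf _) fun _ hx => hv _ hx

theorem supportedOn_preimage_singleton_iff (π : C(F₁.X, F₂.X)) (hμ : μ ∈ stateSet F₁.X)
    {y : F₂.X} : SupportedOn F₁ μ (π ⁻¹' {y}) ↔ pushState π μ = diracState F₂.X y := by
  refine ⟨fun h => (h.pushState π).eq_diracState (pushState_mem_stateSet π hμ),
    fun h f hf hv => le_antisymm (le_of_forall_pos_le_add fun ε hε => ?_) (hμ.2.2.1 f hf)⟩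
  have hK : IsClosed {x | ε ≤ f x} := isClosed_le continuous_const f.continuous
  -- `‖f‖ • (u ∘ π)` dominates `f` where `f ≥ ε`, and `μ (u ∘ π) = u y = 0`.
  obtain ⟨u, hu0, hu1, hu01⟩ := exists_continuous_zero_one_of_isClosed isClosed_singleton
    (hK.isCompact.image π.continuous).isClosed
    (disjoint_singleton_left.2 fun ⟨x, (hxε : ε ≤ f x), (hxy : π x = y)⟩ => by
      linarith [hv x hxy])
  have hle : ∀ x, f x ≤ (ContinuousMap.const F₁.X ε + ‖f‖ • u.comp π) x := fun x => by
    have hfx : f x ≤ ‖f‖ := (abs_le.1 (by simpa using f.norm_coe_le_norm x)).2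
    simp only [ContinuousMap.add_apply, ContinuousMap.const_apply, ContinuousMap.smul_apply,
      ContinuousMap.comp_apply, smul_eq_mul]
    rcases lt_or_ge (f x) ε with hx | hx
    · nlinarith [norm_nonneg f, (hu01 (π x)).1]
    · rw [hu1 ⟨x, hx, rfl⟩, Pi.one_apply]
      linarith
  have hu : μ (u.comp π) = 0 := by simpa [pushState, diracState, hu0 rfl] using congrFun h u
  calc μ f ≤ _ := state_mono hμ hle
    _ = 0 + ε := by rw [hμ.1.map_add, state_const hμ, hμ.1.map_smul, hu, smul_zero, add_comm]

def fiberStates (F₁ : GFlow.{u, v} G) (F₂ : GFlow.{u, w} G) (f : F₁.X → F₂.X) :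
    Set (C(F₁.X, ℝ) → ℝ) :=
  {ν | ν ∈ stateSet F₁.X ∧ ∃ y, SupportedOn F₁ ν (f ⁻¹' {y})}

variable {f : F₁.X → F₂.X}

theorem IsGMap.fiberStates_eq (hf : IsGMap F₁ F₂ f) : fiberStates F₁ F₂ f =
    stateSet F₁.X ∩ pushState hf.toContinuousMap ⁻¹' range (diracState F₂.X) := by
  ext ν
  refine and_congr_right fun hν => exists_congr fun y => ?_
  exact (supportedOn_preimage_singleton_iff hf.toContinuousMap hν).trans eq_comm

theorem IsGMap.isClosed_fiberStates (hf : IsGMap F₁ F₂ f) : IsClosed (fiberStates F₁ F₂ f) := by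
  rw [hf.fiberStates_eq]
  exact isClosed_stateSet.inter (isClosed_range_diracState.preimage (continuous_pushState _))

theorem IsGMap.stateSMul_mem_fiberStates (hf : IsGMap F₁ F₂ f) (g : G) {ν : C(F₁.X, ℝ) → ℝ}
    (hν : ν ∈ fiberStates F₁ F₂ f) : stateSMul F₁ g ν ∈ fiberStates F₁ F₂ f := by
  rw [hf.fiberStates_eq] at hν ⊢
  obtain ⟨hνs, y, hy⟩ := hν
  exact ⟨stateSMul_mem_stateSet g hνs, g • y, by
    rw [hf.pushState_stateSMul, ← hy, stateSMul_diracState]⟩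

end Fibers

section StronglyProximal

variable {F : GFlow.{u, v} G} {Y : GFlow.{u, w} G} {φ : F.X → Y.X}

theorem IsStronglyProximalExt.exists_diracState_mem (hφ : IsStronglyProximalExt F Y φ)
    {μ : C(F.X, ℝ) → ℝ} (hμ : μ ∈ fiberStates F Y φ) :
    ∃ x, diracState F.X x ∈ closure (stateOrbit F μ) :=
  hμ.2.elim fun y hy => hφ.2 y μ hμ.1 hy

theorem IsStronglyProximalExt.of_comp {Z : GFlow.{u, x} G} {π : F.X → Z.X} {ψ : Z.X → Y.X}
    (hφ : IsStronglyProximalExt F Y φ) (hπ : IsExtension F Z π) (hψπ : ∀ x, ψ (π x) = φ x) :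
    IsStronglyProximalExt F Z π :=
  ⟨hπ, fun z μ hμ hS => hφ.2 (ψ z) μ hμ <|
    hS.mono fun x (hx : π x = z) => show φ x = ψ z by rw [← hψπ, hx]⟩

theorem IsStronglyProximalExt.comp_homeomorph {F' : GFlow.{u, x} G}
    (hφ : IsStronglyProximalExt F Y φ) (e : F'.X ≃ₜ F.X) (he : ∀ (g : G) x, e (g • x) = g • e x) :
    IsStronglyProximalExt F' Y (φ ∘ e) := by
  have heG : IsGMap F' F e := ⟨e.continuous, he⟩
  have heG' : IsGMap F F' e.symm :=
    ⟨e.symm.continuous, fun g x => e.injective (by simp only [he, e.apply_symm_apply])⟩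
  refine ⟨⟨⟨hφ.1.1.1.comp e.continuous, fun g x => by simp [he, hφ.1.1.2]⟩,
    hφ.1.2.comp e.surjective⟩, fun y μ hμ hS => ?_⟩
  have hμ' := pushState_mem_stateSet heG.toContinuousMap hμ
  obtain ⟨x, hx⟩ := hφ.exists_diracState_mem ⟨hμ', y, hS.pushState heG.toContinuousMap⟩
  have hback : pushState heG'.toContinuousMap (pushState heG.toContinuousMap μ) = μ :=
    funext fun f => congrArg μ (ContinuousMap.ext fun x => congrArg f (e.symm_apply_apply x))
  have := heG'.image_closure_stateOrbit hμ' ▸ mem_image_of_mem _ hx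
  rw [hback, pushState_diracState] at this
  exact ⟨e.symm x, this⟩

variable {Z : GFlow.{u, x} G} {π : F.X → Z.X} {ψ : Z.X → Y.X}

theorem IsStronglyProximalExt.exists_mem_closure_stateOrbit_fiberStates
    (hψ : IsStronglyProximalExt Z Y ψ) (hπ : IsGMap F Z π) (hψπ : ∀ x, ψ (π x) = φ x)
    {ν : C(F.X, ℝ) → ℝ} (hν : ν ∈ fiberStates F Y φ) :
    ∃ ν' ∈ closure (stateOrbit F ν), ν' ∈ fiberStates F Z π := by
  obtain ⟨hνs, y, hy⟩ := hν
  have hy' : SupportedOn Z (pushState hπ.toContinuousMap ν) (ψ ⁻¹' {y}) :=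
    SupportedOn.pushState _ <| hy.mono fun x (hx : φ x = y) => show ψ (π x) = y by rw [hψπ, hx]
  obtain ⟨z, hz⟩ := hψ.exists_diracState_mem ⟨pushState_mem_stateSet _ hνs, y, hy'⟩
  rw [← hπ.image_closure_stateOrbit hνs] at hz
  obtain ⟨ν', hν', hν'z⟩ := hz
  have hν's := closure_stateOrbit_subset_stateSet hνs hν'
  exact ⟨ν', hν', hν's, z, (supportedOn_preimage_singleton_iff _ hν's).2 hν'z⟩

end StronglyProximal

section Rigidity

theorem eq_of_forall_apply_eq_midpoint {X : Type*} [TopologicalSpace X] [CompactSpace X]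
    [T2Space X] {p q z : X} (h : ∀ f : C(X, ℝ), (f p + f q) / 2 = f z) : p = z := by
  by_contra hne
  obtain ⟨f, hfz, hfp, hf01⟩ := exists_continuous_zero_one_of_isClosed isClosed_singleton
    isClosed_singleton (disjoint_singleton.2 (Ne.symm hne))
  have := h f
  rw [hfz rfl, hfp rfl, Pi.one_apply, Pi.zero_apply] at this
  linarith [(hf01 q).1]

variable {F : GFlow.{u, v} G} {Y : GFlow.{u, w} G} {φ : F.X → Y.X}

theorem IsStronglyProximalExt.exists_apply_eq_self (hφ : IsStronglyProximalExt F Y φ)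
    {e : F.X → F.X} (he : IsGMap F F e) (hφe : ∀ x, φ (e x) = φ x) : ∃ z, e z = z := by
  obtain ⟨x₀⟩ := F.instNonempty
  let m : F.X × F.X → C(F.X, ℝ) → ℝ := fun p f => (f p.1 + f p.2) / 2
  have hm : Continuous m := continuous_pi fun f =>
    ((f.continuous.comp continuous_fst).add (f.continuous.comp continuous_snd)).div_const 2
  have hμ : m (x₀, e x₀) ∈ fiberStates F Y φ := by
    refine ⟨mem_stateSet_iff.2 ⟨⟨fun a b => ?_, fun c f => ?_⟩, fun f hf => ?_, ?_⟩, φ x₀, ?_⟩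
    · simp only [m, ContinuousMap.add_apply]; ring
    · simp only [m, ContinuousMap.smul_apply, smul_eq_mul]; ring
    · exact div_nonneg (add_nonneg (hf _) (hf _)) zero_le_two
    · simp [m]
    · intro f _ hv
      simp [m, hv x₀ rfl, hv (e x₀) (hφe x₀)]
  obtain ⟨z, hz⟩ := hφ.exists_diracState_mem hμ
  have horbit : stateOrbit F (m (x₀, e x₀)) = m '' range fun g : G => g • (x₀, e x₀) := by
    ext ν
    simp only [← range_comp]
    exact ⟨fun ⟨g, h⟩ => ⟨g, h.symm⟩, fun ⟨g, h⟩ => ⟨g, h.symm⟩⟩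
  rw [horbit, hm.isClosedMap.closure_image_eq_of_continuous hm] at hz
  obtain ⟨⟨p, q⟩, hpq, hmz⟩ := hz
  have hq : q = e p := by
    refine closure_minimal ?_ (isClosed_eq continuous_snd (he.1.comp continuous_fst)) hpq
    rintro _ ⟨g, rfl⟩
    exact (he.2 g x₀).symm
  have hp : p = z := eq_of_forall_apply_eq_midpoint fun f => congrFun hmz f
  have hq' : q = z := eq_of_forall_apply_eq_midpoint fun f => by
    rw [add_comm]; exact congrFun hmz f
  exact ⟨p, by rw [← hq, hq', hp]⟩

theorem IsStronglyProximalExt.eq_self_of_isGMap {F : GFlow.{u, v} G} {Y : GFlow.{u, w} G}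
    {φ : F.X → Y.X} (hF : F.IsMinimal) (hφ : IsStronglyProximalExt F Y φ) {e : F.X → F.X}
    (he : IsGMap F F e) (hφe : ∀ x, φ (e x) = φ x) (x : F.X) : e x = x :=
  have ⟨_, hz⟩ := hφ.exists_apply_eq_self he hφe
  he.eq_self_of_apply_eq_self hF hz x

end Rigidity

section Separating

variable {F : GFlow.{u, v} G} {Y : GFlow.{u, w} G} {ι : Type*} {Z : ι → GFlow.{u, x} G}
  {φ : F.X → Y.X} {π : ∀ i, F.X → (Z i).X} {ψ : ∀ i, (Z i).X → Y.X}

theorem exists_mem_closure_stateOrbit_forall_mem_fiberStates (hφ : IsGMap F Y φ)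
    (hπ : ∀ i, IsGMap F (Z i) (π i)) (hψ : ∀ i, IsStronglyProximalExt (Z i) Y (ψ i))
    (hψπ : ∀ i x, ψ i (π i x) = φ x) {μ : C(F.X, ℝ) → ℝ} (hμ : μ ∈ fiberStates F Y φ)
    (s : Finset ι) : ∃ ν ∈ closure (stateOrbit F μ) ∩ fiberStates F Y φ,
      ∀ i ∈ s, ν ∈ fiberStates F (Z i) (π i) := by
  classical
  induction s using Finset.induction_on with
  | empty => exact ⟨μ, ⟨self_mem_closure_stateOrbit μ, hμ⟩, by simp⟩
  | insert a s _ ih =>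
    obtain ⟨ν, hν, hνs⟩ := ih
    obtain ⟨ν', hν', hν'a⟩ := (hψ a).exists_mem_closure_stateOrbit_fiberStates (hπ a) (hψπ a) hν.2
    let S := (closure (stateOrbit F μ) ∩ fiberStates F Y φ) ∩ ⋂ i ∈ s, fiberStates F (Z i) (π i)
    have hS : closure (stateOrbit F ν) ⊆ S := by
      refine closure_stateOrbit_subset ((isClosed_closure.inter hφ.isClosed_fiberStates).inter
        (isClosed_biInter fun i _ => (hπ i).isClosed_fiberStates)) (fun g ρ hρ => ?_)
        ⟨hν, mem_iInter₂.2 hνs⟩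
      obtain ⟨⟨hρμ, hρφ⟩, hρπ⟩ := hρ
      exact ⟨⟨stateSMul_mem_closure_stateOrbit g hρμ, hφ.stateSMul_mem_fiberStates g hρφ⟩,
        mem_iInter₂.2 fun i hi => (hπ i).stateSMul_mem_fiberStates g (mem_iInter₂.1 hρπ i hi)⟩
    refine ⟨ν', (hS hν').1, fun i hi => ?_⟩
    rcases Finset.mem_insert.1 hi with rfl | hi
    · exact hν'a
    · exact mem_iInter₂.1 (hS hν').2 i hi

theorem isStronglyProximalExt_of_separating (hφ : IsExtension F Y φ)
    (hπ : ∀ i, IsGMap F (Z i) (π i)) (hψ : ∀ i, IsStronglyProximalExt (Z i) Y (ψ i))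
    (hψπ : ∀ i x, ψ i (π i x) = φ x) (hsep : ∀ a b, φ a = φ b → (∀ i, π i a = π i b) → a = b) :
    IsStronglyProximalExt F Y φ := by
  refine ⟨hφ, fun y μ hμ hS => ?_⟩
  have hK : IsCompact (closure (stateOrbit F μ) ∩ fiberStates F Y φ) :=
    (isCompact_closure_stateOrbit hμ).inter_right hφ.1.isClosed_fiberStates
  obtain ⟨ν, ⟨hνμ, hνs, y', hνy⟩, hνπ⟩ := hK.inter_iInter_nonempty
    (fun i => fiberStates F (Z i) (π i)) (fun i => (hπ i).isClosed_fiberStates) fun s => by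
      obtain ⟨ν, hν, hνs⟩ := exists_mem_closure_stateOrbit_forall_mem_fiberStates hφ.1 hπ hψ hψπ
        ⟨hμ, y, hS⟩ s
      exact ⟨ν, hν, mem_iInter₂.2 hνs⟩
  choose w hw using fun i => (mem_iInter.1 hνπ i).2
  have hsupp : SupportedOn F ν (φ ⁻¹' {y'} ∩ ⋂ i, π i ⁻¹' {w i}) :=
    hνy.inter hνs (isClosed_singleton.preimage hφ.1.1)
      (isClosed_iInter fun i => isClosed_singleton.preimage (hπ i).1)
      (SupportedOn.iInter hνs (fun i => isClosed_singleton.preimage (hπ i).1) hw)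
  obtain ⟨x, rfl⟩ := hsupp.exists_eq_diracState hνs fun a ha b hb =>
    hsep a b (ha.1.trans hb.1.symm) fun i => (mem_iInter.1 ha.2 i).trans (mem_iInter.1 hb.2 i).symm
  exact ⟨x, hνμ⟩

end Separating

def GFlow.prodPi (Y : GFlow.{u, v} G) {ι : Type w} (Z : ι → GFlow.{u, w} G) :
    GFlow.{u, max v w} G :=
  { X := Y.X × ∀ i, (Z i).X }

theorem exists_isMinimal_isStronglyProximalExt_factoring {Y : GFlow.{u, v} G}
    (hY : Y.IsMinimal) {ι : Type w} (Z : ι → GFlow.{u, w} G) (ψ : ∀ i, (Z i).X → Y.X)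
    (hψ : ∀ i, IsStronglyProximalExt (Z i) Y (ψ i)) :
    ∃ (X : GFlow.{u, max v w} G) (φ : X.X → Y.X) (π : ∀ i, X.X → (Z i).X),
      X.IsMinimal ∧ IsStronglyProximalExt X Y φ ∧
        ∀ i, IsGMap X (Z i) (π i) ∧ ∀ x, ψ i (π i x) = φ x := by
  have hC : IsSubflow (Y.prodPi Z) {p | ∀ i, ψ i (p.2 i) = p.1} := by
    refine ⟨?_, ?_, fun g p hp i => ?_⟩
    · obtain ⟨y⟩ := Y.instNonempty
      exact ⟨(y, fun i => ((hψ i).1.2 y).choose), fun i => ((hψ i).1.2 y).choose_spec⟩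
    · simp only [ofPred_forall]
      exact isClosed_iInter fun i =>
        isClosed_eq ((hψ i).1.1.1.comp ((continuous_apply i).comp continuous_snd)) continuous_fst
    · exact ((hψ i).1.1.2 g (p.2 i)).trans (congrArg (g • ·) (hp i))
  obtain ⟨M, hMC, hM⟩ := hC.exists_minimal
  let X := (Y.prodPi Z).sub hM.1
  let φ (p : X.X) : Y.X := p.1.1
  let π i (p : X.X) : (Z i).X := p.1.2 i
  have hφ : IsGMap X Y φ := ⟨by fun_prop, fun _ _ => rfl⟩
  have hπ : ∀ i, IsGMap X (Z i) (π i) := fun i => ⟨by fun_prop, fun _ _ => rfl⟩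
  have hψπ : ∀ i p, ψ i (π i p) = φ p := fun i p => hMC p.2 i
  refine ⟨X, _, _, GFlow.isMinimal_sub hM, isStronglyProximalExt_of_separating
    ⟨hφ, hφ.surjective_of_isMinimal hY⟩ hπ hψ hψπ ?_, fun i => ⟨hπ i, hψπ i⟩⟩
  exact fun a b hab hi => Subtype.ext (Prod.ext hab (funext hi))

section Coding

open TopologicalSpace

theorem exists_continuous_injective_of_separableSpace (X : Type*) [TopologicalSpace X]
    [CompactSpace X] [T2Space X] [SeparableSpace X] [Nonempty X] :
    ∃ f : X → (ℕ → ℝ) → ℝ, Continuous f ∧ Injective f := by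
  obtain ⟨u, hu⟩ := exists_dense_seq X
  let R : C(X, ℝ) → ℕ → ℝ := fun f n => f (u n)
  have hR : Injective R := fun f₁ f₂ h =>
    ContinuousMap.ext (congrFun (hu.equalizer f₁.continuous f₂.continuous (funext (congrFun h))))
  refine ⟨fun x c => invFun R c x, continuous_pi fun c => (invFun R c).continuous,
    fun a b hab => by_contra fun hne => ?_⟩
  obtain ⟨f, hfa, hfb, -⟩ := exists_continuous_zero_one_of_isClosed isClosed_singleton
    isClosed_singleton (disjoint_singleton.2 hne)
  have := congrFun hab (R f)
  simp only [leftInverse_invFun hR f, hfa rfl, hfb rfl, Pi.zero_apply, Pi.one_apply] at this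
  exact zero_ne_one this

/-- Codes for flows over `Y`, all carried by subsets of one fixed space, so that they form a set.
Minimal flows of a separable group are separable and embed into `ℝ ^ (ℕ → ℝ)`, so every minimal
extension of `Y` is isomorphic to a coded one. -/
structure FlowCode (G : Type u) [Group G] [TopologicalSpace G] [IsTopologicalGroup G]
    (Y : GFlow.{u, v} G) : Type (max u v) where
  carrier : Set (ULift.{max u v} ((ℕ → ℝ) → ℝ))
  [nonempty : Nonempty carrier]
  isCompact : IsCompact carrier
  [mulAction : MulAction G carrier]
  [continuousSMul : ContinuousSMul G carrier]
  toY : carrier → Y.X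

variable {Y : GFlow.{u, v} G}

def FlowCode.flow (c : FlowCode G Y) : GFlow.{u, max u v} G :=
  letI := c.mulAction
  haveI := c.continuousSMul
  haveI := c.nonempty
  haveI := isCompact_iff_compactSpace.mp c.isCompact
  { X := c.carrier }

variable {Z : GFlow.{u, w} G}

def FlowCode.ofHomeomorph (Z : GFlow.{u, w} G) (ψ : Z.X → Y.X)
    {A : Set (ULift.{max u v} ((ℕ → ℝ) → ℝ))} (e : Z.X ≃ₜ A) : FlowCode G Y where
  carrier := A
  nonempty := ⟨e (Classical.arbitrary Z.X)⟩
  isCompact := isCompact_iff_compactSpace.mpr e.compactSpace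
  mulAction := e.symm.toEquiv.mulAction G
  continuousSMul :=
    letI := e.symm.toEquiv.mulAction G
    ⟨e.continuous.comp (continuous_fst.smul (e.symm.continuous.comp continuous_snd))⟩
  toY := ψ ∘ e.symm

theorem FlowCode.ofHomeomorph_symm_smul (ψ : Z.X → Y.X)
    {A : Set (ULift.{max u v} ((ℕ → ℝ) → ℝ))} (e : Z.X ≃ₜ A) (g : G)
    (a : (FlowCode.ofHomeomorph Z ψ e).flow.X) : e.symm (g • a) = g • e.symm a :=
  e.symm_apply_apply _

theorem exists_flowCode [SeparableSpace G] (hZ : Z.IsMinimal) {ψ : Z.X → Y.X}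
    (hψ : IsStronglyProximalExt Z Y ψ) : ∃ c : FlowCode G Y,
      IsStronglyProximalExt c.flow Y c.toY ∧
        ∃ e : c.flow.X → Z.X, IsGMap c.flow Z e ∧ ∀ x, ψ (e x) = c.toY x := by
  have : SeparableSpace Z.X := (hZ.denseRange_smul (Classical.arbitrary Z.X)).separableSpace
    (continuous_id.smul continuous_const)
  obtain ⟨f, hf, hinj⟩ := exists_continuous_injective_of_separableSpace Z.X
  let f' (z : Z.X) : ULift.{max u v} ((ℕ → ℝ) → ℝ) := ULift.up (f z)
  let e := ((continuous_uliftUp.comp hf : Continuous f').isClosedEmbedding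
    (ULift.up_injective.comp hinj)).isEmbedding.toHomeomorph
  refine ⟨FlowCode.ofHomeomorph Z ψ e,
    hψ.comp_homeomorph (F' := (FlowCode.ofHomeomorph Z ψ e).flow) e.symm
      (FlowCode.ofHomeomorph_symm_smul ψ e), e.symm,
    ⟨e.symm.continuous, FlowCode.ofHomeomorph_symm_smul ψ e⟩, fun _ => rfl⟩

end Coding

section Universal

def IsUniversalStronglyProximalExt (X : GFlow.{u, w} G) (Y : GFlow.{u, v} G)
    (φ : X.X → Y.X) : Prop :=
  ∀ (Z : GFlow.{u, w} G) (ψ : Z.X → Y.X), Z.IsMinimal → IsStronglyProximalExt Z Y ψ →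
    ∃ π : X.X → Z.X, IsStronglyProximalExt X Z π ∧ ψ ∘ π = φ

variable {Y : GFlow.{u, v} G}

theorem exists_isUniversalStronglyProximalExt [TopologicalSpace.SeparableSpace G]
    (hY : Y.IsMinimal) : ∃ (X : GFlow.{u, max u v} G) (φ : X.X → Y.X), X.IsMinimal ∧
      IsStronglyProximalExt X Y φ ∧ IsUniversalStronglyProximalExt X Y φ := by
  obtain ⟨X, φ, π, hX, hφ, hπ⟩ := exists_isMinimal_isStronglyProximalExt_factoring hY
    (fun c : {c : FlowCode G Y // IsStronglyProximalExt c.flow Y c.toY} => c.1.flow)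
    (fun c => c.1.toY) fun c => c.2
  refine ⟨X, φ, hX, hφ, fun Z ψ hZ hψ => ?_⟩
  obtain ⟨c, hc, e, he, hψe⟩ := exists_flowCode hZ hψ
  obtain ⟨hπc, hπφ⟩ := hπ ⟨c, hc⟩
  have hψπ : ∀ x, ψ (e (π ⟨c, hc⟩ x)) = φ x := fun x => (hψe _).trans (hπφ x)
  exact ⟨_, hφ.of_comp ⟨he.comp hπc, (he.comp hπc).surjective_of_isMinimal hZ⟩ hψπ,
    funext hψπ⟩

theorem IsUniversalStronglyProximalExt.exists_bijective {X X' : GFlow.{u, w} G}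
    {φ : X.X → Y.X} {φ' : X'.X → Y.X} (hU : IsUniversalStronglyProximalExt X Y φ)
    (hU' : IsUniversalStronglyProximalExt X' Y φ') (hX : X.IsMinimal)
    (hφ : IsStronglyProximalExt X Y φ) (hX' : X'.IsMinimal) (hφ' : IsStronglyProximalExt X' Y φ') :
    ∃ e : X.X → X'.X, IsGMap X X' e ∧ Bijective e := by
  obtain ⟨π, hπ, hπφ⟩ := hU X' φ' hX' hφ'
  obtain ⟨π', hπ', hπφ'⟩ := hU' X φ hX hφ
  have hπ'π : ∀ x, π' (π x) = x := hφ.eq_self_of_isGMap hX (hπ'.1.1.comp hπ.1.1) fun x =>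
    (congrFun hπφ' (π x)).trans (congrFun hπφ x)
  have hππ' : ∀ x, π (π' x) = x := hφ'.eq_self_of_isGMap hX' (hπ.1.1.comp hπ'.1.1) fun x =>
    (congrFun hπφ (π' x)).trans (congrFun hπφ' x)
  exact ⟨π, hπ.1.1, LeftInverse.injective hπ'π, RightInverse.surjective hππ'⟩

end Universal

/-- **Statement 8.** Every minimal flow of a Polish group admits a maximal strongly
proximal extension, unique up to isomorphism. -/
theorem statement8 {G : Type u} [Group G] [TopologicalSpace G] [IsTopologicalGroup G]
    [PolishSpace G] (Y : GFlow.{u, v} G) (hY : Y.IsMinimal) :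
    ∃ (X : GFlow.{u, max u v} G) (φ : X.X → Y.X),
      X.IsMinimal ∧ IsStronglyProximalExt X Y φ ∧
      (∀ (Z : GFlow.{u, max u v} G) (ψ : Z.X → Y.X), Z.IsMinimal →
        IsStronglyProximalExt Z Y ψ →
        ∃ π : X.X → Z.X, IsStronglyProximalExt X Z π ∧ ψ ∘ π = φ) ∧
      ∀ (X' : GFlow.{u, max u v} G) (φ' : X'.X → Y.X), X'.IsMinimal →
        IsStronglyProximalExt X' Y φ' →
        (∀ (Z : GFlow.{u, max u v} G) (ψ : Z.X → Y.X), Z.IsMinimal →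
          IsStronglyProximalExt Z Y ψ →
          ∃ π : X'.X → Z.X, IsStronglyProximalExt X' Z π ∧ ψ ∘ π = φ') →
        ∃ e : X.X → X'.X, IsGMap X X' e ∧ Function.Bijective e := by
  obtain ⟨X, φ, hX, hφ, hU⟩ := exists_isUniversalStronglyProximalExt hY
  exact ⟨X, φ, hX, hφ, hU, fun X' φ' hX' hφ' hU' => hU.exists_bijective hU' hX hφ hX' hφ'⟩
end

section
/- Let G be a topological group and let φ: L → K be an affine G-irreducible extension of affine G-flows. Then there exists a subset S ⊆ ext(L) with φ(S) = ext(K) and cardinality #S ≤ #ext(K), such that L equals the closed convex hull of G·S = {g·s : g ∈ G, s ∈ S}. Consequently, the cardinality of L is at most 2^(2^(𝔠 · #G · #K)), where 𝔠 is the cardinality of the continuum. -/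
universe u v w x

/-- An affine `G`-flow `K` is affine `G`-projective if for all affine `G`-flows `L`, `P`,
every affine `G`-map `φ : K → L` and every affine extension `π : P → L`, there is an
affine `G`-map `ψ : K → P` with `π ∘ ψ = φ` (on the carrier of `K`). -/
def IsAffineGProjective {G : Type u} [Group G] [TopologicalSpace G] [IsTopologicalGroup G]
    (K : AffineFlow.{u, v} G) : Prop :=
  ∀ (L : AffineFlow.{u, w} G) (P : AffineFlow.{u, x} G) (φ : K.E → L.E) (π : P.E → L.E),
    IsAffineGMap K L φ → IsAffineExtension P L π →
    ∃ ψ : K.E → P.E, IsAffineGMap K P ψ ∧ ∀ y ∈ K.carrier, π (ψ y) = φ y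

/-!
Every extreme point `y` of `K` lifts to an extreme point of `L`: the fibre `L ∩ f⁻¹{y}` is a
nonempty compact face of `L`, and an extreme point of it (Krein–Milman) is extreme in `L`.
Choosing one lift per extreme point gives `S`. The closed convex hull of `G • S = L.orbits S`
is an affine subflow of `L` whose image is a compact convex set containing `ext K`, hence all
of `K`; irreducibility forces it to be `L`. Counting, `#conv (G • S) ≤ max (#G * #K) 𝔠`, and in a
Hausdorff space a point of `closure A` is determined by which subsets of `A` it is adherent
to, so `#closure A ≤ 2 ^ 2 ^ #A`.
-/

open Set Cardinal

theorem Cardinal.mk_closure_le {X : Type u} [TopologicalSpace X] [T2Space X] (A : Set X) :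
    #(closure A) ≤ 2 ^ (2 : Cardinal) ^ #A := by
  let adherent : closure A → Set (Set A) := fun x => {s | (x : X) ∈ closure (Subtype.val '' s)}
  have hinj : Function.Injective adherent := by
    rintro ⟨x, hx⟩ ⟨y, hy⟩ hxy
    by_contra hne
    obtain ⟨U, V, hU, hV, hxU, hyV, hUV⟩ := t2_separation fun h => hne (Subtype.ext h)
    have hx_mem : Subtype.val ⁻¹' U ∈ adherent ⟨x, hx⟩ := by
      change x ∈ closure (Subtype.val '' (Subtype.val ⁻¹' U))
      rw [Subtype.image_preimage_coe, inter_comm]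
      exact hU.inter_closure ⟨hxU, hx⟩
    have hy_mem : Subtype.val ⁻¹' U ∈ adherent ⟨y, hy⟩ := hxy ▸ hx_mem
    change y ∈ closure (Subtype.val '' (Subtype.val ⁻¹' U)) at hy_mem
    rw [Subtype.image_preimage_coe] at hy_mem
    exact (hUV.closure_left hV).notMem_of_mem_right hyV (closure_mono inter_subset_right hy_mem)
  calc #(closure A) ≤ #(Set (Set A)) := mk_le_of_injective hinj
    _ = 2 ^ (2 : Cardinal) ^ #A := by rw [mk_set, mk_set]

theorem Cardinal.mk_convexHull_le {E : Type u} [AddCommGroup E] [Module ℝ E] (A : Set E) :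
    #(convexHull ℝ A) ≤ max #A 𝔠 := by
  rcases A.eq_empty_or_nonempty with rfl | hA
  · simp
  have : Nonempty A := hA.to_subtype
  have hspan : convexHull ℝ A ⊆ range (Finsupp.linearCombination ℝ ((↑) : A → E)) := by
    rw [← LinearMap.coe_range, Finsupp.range_linearCombination, Subtype.range_coe]
    exact convexHull_min Submodule.subset_span (Submodule.span ℝ A).convex
  calc #(convexHull ℝ A) ≤ #(range (Finsupp.linearCombination ℝ ((↑) : A → E))) :=
        mk_le_mk_of_subset hspan
    _ ≤ #(A →₀ ℝ) := mk_range_le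
    _ = max #A 𝔠 := by simp [mk_real]

section IsAffineOn

variable {E F : Type*} [AddCommGroup E] [Module ℝ E] [AddCommGroup F] [Module ℝ F]

def IsAffineOn (C : Set E) (f : E → F) : Prop :=
  ∀ x ∈ C, ∀ y ∈ C, ∀ t : ℝ, 0 ≤ t → t ≤ 1 → f (t • x + (1 - t) • y) = t • f x + (1 - t) • f y

variable {C D S : Set E} {f : E → F}

theorem IsAffineOn.mono (hf : IsAffineOn C f) (hDC : D ⊆ C) : IsAffineOn D f :=
  fun x hx y hy => hf x (hDC hx) y (hDC hy)

theorem IsAffineOn.image_convexHull_subset (hf : IsAffineOn C f) (hC : Convex ℝ C)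
    (hSC : S ⊆ C) : f '' convexHull ℝ S ⊆ convexHull ℝ (f '' S) := by
  have hT : convexHull ℝ S ⊆ {x | x ∈ C ∧ f x ∈ convexHull ℝ (f '' S)} := by
    refine convexHull_min (fun x hx => ⟨hSC hx, subset_convexHull ℝ _ (mem_image_of_mem f hx)⟩) ?_
    rintro x ⟨hxC, hfx⟩ y ⟨hyC, hfy⟩ a b ha hb hab
    obtain rfl : b = 1 - a := by linarith
    refine ⟨hC hxC hyC ha hb hab, ?_⟩
    rw [hf x hxC y hyC a ha (by linarith)]
    exact convex_convexHull ℝ _ hfx hfy ha hb hab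
  rintro _ ⟨x, hx, rfl⟩
  exact (hT hx).2

theorem IsAffineOn.convex_image (hf : IsAffineOn C f) (hC : Convex ℝ C) : Convex ℝ (f '' C) := by
  rintro _ ⟨x, hx, rfl⟩ _ ⟨y, hy, rfl⟩ a b ha hb hab
  obtain rfl : b = 1 - a := by linarith
  exact ⟨a • x + (1 - a) • y, hC hx hy ha hb hab, hf x hx y hy a ha (by linarith)⟩

theorem IsAffineOn.isExtreme_inter_preimage (hf : IsAffineOn C f) {K : Set F}
    (hmap : MapsTo f C K) {y : F} (hy : y ∈ K.extremePoints ℝ) : IsExtreme ℝ C (C ∩ f ⁻¹' {y}) := by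
  refine ⟨inter_subset_left, ?_⟩
  rintro x₁ hx₁ x₂ hx₂ z ⟨-, hfz⟩ ⟨a, b, ha, hb, hab, rfl⟩
  obtain rfl : b = 1 - a := by linarith
  have hy_mem : y ∈ openSegment ℝ (f x₁) (f x₂) :=
    ⟨a, 1 - a, ha, hb, hab, by rw [← hf x₁ hx₁ x₂ hx₂ a ha.le (by linarith), hfz]⟩
  exact ⟨hx₁, hy.2 (hmap hx₁) (hmap hx₂) hy_mem⟩

variable [TopologicalSpace E] [TopologicalSpace F]

theorem IsAffineOn.image_eq_of_extremePoints_subset [T2Space F] [IsTopologicalAddGroup F]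
    [ContinuousSMul ℝ F] [LocallyConvexSpace ℝ F] {K : Set F} (hf : IsAffineOn C f)
    (hC : IsCompact C) (hCconv : Convex ℝ C) (hfc : ContinuousOn f C) (hK : IsCompact K)
    (hKconv : Convex ℝ K) (hCK : f '' C ⊆ K) (hext : K.extremePoints ℝ ⊆ f '' C) :
    f '' C = K := by
  refine hCK.antisymm ?_
  rw [← closure_convexHull_extremePoints hK hKconv]
  exact closure_minimal (convexHull_min hext (hf.convex_image hCconv))
    (hC.image_of_continuousOn hfc).isClosed

theorem IsAffineOn.exists_mem_extremePoints_apply_eq [T2Space E] [IsTopologicalAddGroup E]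
    [ContinuousSMul ℝ E] [LocallyConvexSpace ℝ E] [T1Space F] (hf : IsAffineOn C f)
    (hC : IsCompact C) (hfc : ContinuousOn f C) {K : Set F} (hmap : MapsTo f C K) {y : F}
    (hy : y ∈ K.extremePoints ℝ) (hyC : y ∈ f '' C) :
    ∃ x ∈ C.extremePoints ℝ, f x = y := by
  have hfibre : IsCompact (C ∩ f ⁻¹' {y}) :=
    hC.of_isClosed_subset (hfc.preimage_isClosed_of_isClosed hC.isClosed isClosed_singleton)
      inter_subset_left
  obtain ⟨x, hx⟩ := hfibre.extremePoints_nonempty (by simpa [image, Set.Nonempty] using hyC)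
  exact ⟨x, (hf.isExtreme_inter_preimage hmap hy).extremePoints_subset_extremePoints hx,
    (extremePoints_subset hx).2⟩

end IsAffineOn

namespace AffineFlow

variable {G : Type u} [Group G] [TopologicalSpace G] [IsTopologicalGroup G]
  (L : AffineFlow.{u, v} G)

def orbits (S : Set L.E) : Set L.E := {x : L.E | ∃ g : G, ∃ s ∈ S, x = L.smul g s}

variable {L} {S : Set L.E}

theorem isAffineOn_smul (g : G) : IsAffineOn L.carrier (L.smul g) := L.smul_affine' g

theorem continuousOn_smul_s9 (g : G) : ContinuousOn (L.smul g) L.carrier :=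
  L.continuousOn_smul'.comp (Continuous.prodMk_right g).continuousOn
    fun _ hx => mk_mem_prod (mem_univ g) hx

theorem subset_orbits (hS : S ⊆ L.carrier) : S ⊆ L.orbits S :=
  fun s hs => ⟨1, s, hs, (L.one_smul' s (hS hs)).symm⟩

theorem orbits_subset (hS : S ⊆ L.carrier) : L.orbits S ⊆ L.carrier := by
  rintro _ ⟨g, s, hs, rfl⟩
  exact L.smul_mem' g s (hS hs)

theorem smul_mem_orbits (hS : S ⊆ L.carrier) (g : G) {x : L.E} (hx : x ∈ L.orbits S) :
    L.smul g x ∈ L.orbits S := by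
  obtain ⟨h, s, hs, rfl⟩ := hx
  exact ⟨g * h, s, hs, (L.mul_smul' g h s (hS hs)).symm⟩

theorem lift_mk_orbits_le (S : Set L.E) :
    lift.{u} #(L.orbits S) ≤ lift.{v} #G * lift.{u} #S := by
  have hsurj : Function.Surjective fun p : G × S =>
      (⟨L.smul p.1 p.2, p.1, p.2, p.2.2, rfl⟩ : L.orbits S) := by
    rintro ⟨_, g, s, hs, rfl⟩
    exact ⟨(g, ⟨s, hs⟩), rfl⟩
  have := lift_mk_le_lift_mk_of_surjective hsurj
  rwa [mk_prod, lift_mul, lift_lift, lift_lift, lift_umax.{v, u}] at this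

theorem isAffineSubflow_closure_convexHull_s9 {A : Set L.E} (hA : A.Nonempty) (hAL : A ⊆ L.carrier)
    (hinv : ∀ g : G, ∀ x ∈ A, L.smul g x ∈ A) : L.IsAffineSubflow (closure (convexHull ℝ A)) := by
  have hconv : convexHull ℝ A ⊆ L.carrier := convexHull_min hAL L.convex'
  have hcl : closure (convexHull ℝ A) ⊆ L.carrier := closure_minimal hconv L.isCompact'.isClosed
  refine ⟨hA.mono (subset_closure.trans' (subset_convexHull ℝ A)), hcl, isClosed_closure,
    (convex_convexHull ℝ A).closure, fun g => ?_⟩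
  have hconv_inv : L.smul g '' convexHull ℝ A ⊆ convexHull ℝ A :=
    ((isAffineOn_smul g).image_convexHull_subset L.convex' hAL).trans
      (convexHull_mono (image_subset_iff.mpr fun x hx => hinv g x hx))
  intro x hx
  exact closure_mono hconv_inv (((continuousOn_smul_s9 g).mono hcl).image_closure ⟨x, hx, rfl⟩)

end AffineFlow

section Extension

open AffineFlow

variable {G : Type u} [Group G] [TopologicalSpace G] [IsTopologicalGroup G]
  {L : AffineFlow.{u, v} G} {K : AffineFlow.{u, w} G} {f : L.E → K.E}

theorem IsAffineGMap.isAffineOn (hf : IsAffineGMap L K f) : IsAffineOn L.carrier f := hf.2.2.2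

theorem IsAffineExtension.exists_extremePoints_lift (hf : IsAffineExtension L K f) :
    ∃ S ⊆ L.carrier.extremePoints ℝ, f '' S = K.carrier.extremePoints ℝ ∧
      lift.{w} #S ≤ lift.{v} #(K.carrier.extremePoints ℝ) := by
  obtain ⟨hmap, hcont, -, -⟩ := hf.1
  have hlift (y : K.carrier.extremePoints ℝ) : ∃ x ∈ L.carrier.extremePoints ℝ, f x = y :=
    hf.1.isAffineOn.exists_mem_extremePoints_apply_eq L.isCompact' hcont hmap y.2
      (hf.2.ge (extremePoints_subset y.2))
  choose s hs hfs using hlift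
  refine ⟨range s, range_subset_iff.mpr hs, ?_, mk_range_le_lift⟩
  rw [← range_comp, show f ∘ s = (↑) from funext hfs, Subtype.range_coe]

theorem IsAffineIrreducibleExt.carrier_eq_closure_convexHull_orbits
    (hf : IsAffineIrreducibleExt L K f) {S : Set L.E} (hSL : S ⊆ L.carrier)
    (hS : K.carrier.extremePoints ℝ ⊆ f '' S) :
    L.carrier = closure (convexHull ℝ (L.orbits S)) := by
  obtain ⟨hmap, hcont, -, -⟩ := hf.1.1
  set C := closure (convexHull ℝ (L.orbits S))
  have hSC : S ⊆ C := (subset_orbits hSL).trans ((subset_convexHull ℝ _).trans subset_closure)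
  have hS_ne : S.Nonempty := by
    obtain ⟨y, hy⟩ := K.isCompact'.extremePoints_nonempty K.nonempty'
    obtain ⟨x, hx, -⟩ := hS hy
    exact ⟨x, hx⟩
  have hC : L.IsAffineSubflow C :=
    isAffineSubflow_closure_convexHull_s9 (hS_ne.mono (subset_orbits hSL)) (orbits_subset hSL)
      fun g _ hx => smul_mem_orbits hSL g hx
  have hCL : C ⊆ L.carrier := hC.2.1
  have hfC : f '' C = K.carrier :=
    (hf.1.1.isAffineOn.mono hCL).image_eq_of_extremePoints_subset
      (L.isCompact'.of_isClosed_subset hC.2.2.1 hCL) hC.2.2.2.1 (hcont.mono hCL) K.isCompact'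
      K.convex' ((image_mono hCL).trans hmap.image_subset) (hS.trans (image_mono hSC))
  by_contra hne
  exact hf.2 C hC (Ne.symm hne) hfC

end Extension

/-- **Statement 10.** If `φ : L → K` is an affine `G`-irreducible extension, then there is
`S ⊆ ext L` with `φ(S) = ext K`, `#S ≤ #ext K`, and `L = cl conv (G ⬝ S)`; consequently
`#L ≤ 2 ^ 2 ^ (𝔠 ⬝ #G ⬝ #K)`. -/
theorem statement10 {G : Type u} [Group G] [TopologicalSpace G] [IsTopologicalGroup G]
    (L : AffineFlow.{u, u} G) (K : AffineFlow.{u, u} G) (f : L.E → K.E)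
    (hf : IsAffineIrreducibleExt L K f) :
    (∃ S : Set L.E, S ⊆ L.carrier.extremePoints ℝ ∧
        f '' S = K.carrier.extremePoints ℝ ∧
        Cardinal.mk S ≤ Cardinal.mk (K.carrier.extremePoints ℝ) ∧
        L.carrier = closure (convexHull ℝ {x : L.E | ∃ g : G, ∃ s ∈ S, x = L.smul g s})) ∧
      Cardinal.mk L.carrier ≤
        (2 : Cardinal.{u}) ^ ((2 : Cardinal.{u}) ^ (Cardinal.continuum * Cardinal.mk G * Cardinal.mk K.carrier)) := by
  obtain ⟨S, hS_ext, hfS, hS_card⟩ := hf.1.exists_extremePoints_lift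
  rw [lift_id, lift_id] at hS_card
  have hSL : S ⊆ L.carrier := hS_ext.trans extremePoints_subset
  have hL := hf.carrier_eq_closure_convexHull_orbits hSL hfS.ge
  refine ⟨⟨S, hS_ext, hfS, hS_card, hL⟩, ?_⟩
  have : Nonempty K.carrier := K.nonempty'.to_subtype
  have h𝔠 : 𝔠 ≤ 𝔠 * #G * #K.carrier :=
    (le_mul_of_one_le_right' (Cardinal.one_le_iff_ne_zero.mpr (mk_ne_zero G))).trans
      (le_mul_of_one_le_right' (Cardinal.one_le_iff_ne_zero.mpr (mk_ne_zero K.carrier)))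
  have horbits : #(L.orbits S) ≤ 𝔠 * #G * #K.carrier := calc
    #(L.orbits S) ≤ #G * #S := by simpa only [lift_id] using L.lift_mk_orbits_le S
    _ ≤ #G * #K.carrier :=
      mul_le_mul_right (hS_card.trans (mk_le_mk_of_subset extremePoints_subset)) _
    _ ≤ 𝔠 * #G * #K.carrier := by
      rw [mul_assoc]
      exact le_mul_of_one_le_left' (one_le_aleph0.trans aleph0_le_continuum)
  rw [hL]
  exact (mk_closure_le _).trans <| power_le_power_left two_ne_zero <|
    power_le_power_left two_ne_zero <| (mk_convexHull_le _).trans (max_le horbits h𝔠)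
end

section
/- Let G be a Polish group, X a G-flow, and x₀ ∈ X a point whose orbit is comeager in X. Let Y be a G-flow, φ: Y → X an extension, and C ⊆ φ⁻¹({x₀}) a closed subset that is invariant under the stabilizer Stab(x₀) = {g ∈ G : g·x₀ = x₀}. Then cl(G·C) ∩ φ⁻¹({x₀}) = C, where G·C = {g·c : g ∈ G, c ∈ C}. -/
universe u v w x

variable {G : Type u} [Group G] [TopologicalSpace G] [IsTopologicalGroup G]

/-! Write `π g = g • x₀`. Since the orbit of `x₀` is non-meagre and `G` is separable, every
`π '' W` with `W` open is somewhere dense around each of its points. A Suslin-scheme argument in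
a complete metric for `G` upgrades this to: `interior (closure (π '' W)) \ π '' W` is meagre.
Consequently, if `x₀ ∈ closure (π '' H)` for an open `H`, then `π '' H` meets `π '' A` for every
open `A ∋ 1`, since both are comeagre in a common nonempty open set.

Now let `p ∈ closure (G • C)` lie over `x₀` and let `O ∋ p` be open; choose `A ∋ 1` and `O' ∋ p`
with `A⁻¹ • O' ⊆ O`, and put `H = {g | g • c ∈ O'` for some `c ∈ C}`. Then `x₀ ∈ closure (π '' H)`,
so `h • x₀ = a • x₀` with `h ∈ H`, `a ∈ A`. Now `a⁻¹ * h` fixes `x₀`, hence maps `c` into `C`, and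
`(a⁻¹ * h) • c ∈ A⁻¹ • O' ⊆ O`. So `p ∈ closure C = C`. -/

open Set Filter Topology TopologicalSpace Pointwise

theorem isNowhereDense_diff_of_subset_closure {X : Type*} [TopologicalSpace X] {s O : Set X}
    (hO : IsOpen O) (hs : s ⊆ closure O) : IsNowhereDense (s \ O) := by
  have hfr : IsNowhereDense (frontier O) := by
    rw [isClosed_frontier.isNowhereDense_iff, ← frontier_compl]
    exact interior_frontier hO.isClosed_compl
  exact hfr.mono fun x hx =>
    show x ∈ closure O \ interior O from ⟨hs hx.1, hO.interior_eq.symm ▸ hx.2⟩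

theorem exists_seq_cons_of_forall_exists {ι : Type*} (Q : List ι → Prop) (h0 : Q [])
    (hstep : ∀ s, Q s → ∃ i, Q (i :: s)) :
    ∃ p : ℕ → List ι, (∀ n, (p n).length = n) ∧ (∀ n, ∃ i, p (n + 1) = i :: p n) ∧
      ∀ n, Q (p n) := by
  choose next hnext using hstep
  let q : ℕ → {s // Q s} := fun n =>
    Nat.rec ⟨[], h0⟩ (fun _ s => ⟨next s.1 s.2 :: s.1, hnext s.1 s.2⟩) n
  refine ⟨fun n => (q n).1, fun n => ?_, fun n => ⟨_, rfl⟩, fun n => (q n).2⟩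
  induction n with
  | zero => rfl
  | succ n ih => exact congrArg (· + 1) ih

namespace Metric

variable {α : Type*} [MetricSpace α]

theorem exists_mem_closure_tendsto_smallSets [CompleteSpace α] {A : ℕ → Set α}
    (hA : Antitone A) (hne : ∀ n, (A n).Nonempty) (hb : ∀ n, Bornology.IsBounded (A n))
    (hdiam : Tendsto (fun n => diam (A n)) atTop (𝓝 0)) :
    ∃ g, (∀ n, g ∈ closure (A n)) ∧ Tendsto A atTop (𝓝 g).smallSets := by
  obtain ⟨g, hg⟩ := nonempty_iInter_of_nonempty_biInter (fun n => isClosed_closure)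
    (fun n => (hb n).closure)
    (fun N => (hne N).mono fun x hx => mem_iInter₂.2 fun n hn => subset_closure (hA hn hx))
    (by simpa only [diam_closure] using hdiam)
  rw [mem_iInter] at hg
  refine ⟨g, hg, tendsto_smallSets_iff.2 fun U hU => ?_⟩
  obtain ⟨ε, hε, hball⟩ := Metric.mem_nhds_iff.1 hU
  filter_upwards [hdiam.eventually (gt_mem_nhds hε)] with n hn x hx
  refine hball (lt_of_le_of_lt ?_ hn)
  rw [← diam_closure]
  exact dist_le_diam_of_mem (hb n).closure (subset_closure hx) (hg n)

open Classical in
noncomputable def refiningTree (W : Set α) [SecondCountableTopology α] :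
    List (countableBasis α) → Set α
  | [] => W
  | b :: s =>
    if closure (b : Set α) ⊆ refiningTree W s ∧ Bornology.IsBounded (b : Set α) ∧
        diam (b : Set α) ≤ (1 / 2) ^ s.length then b else ∅

variable [SecondCountableTopology α] {W : Set α}

theorem isOpen_refiningTree (hW : IsOpen W) : ∀ s, IsOpen (refiningTree W s)
  | [] => hW
  | b :: s => by
    rw [refiningTree]
    split_ifs
    exacts [(isBasis_countableBasis α).isOpen b.2, isOpen_empty]

theorem closure_refiningTree_cons_subset (b : countableBasis α) (s : List (countableBasis α)) :
    closure (refiningTree W (b :: s)) ⊆ refiningTree W s := by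
  rw [refiningTree]
  split_ifs with h
  exacts [h.1, by simp]

theorem isBounded_refiningTree_cons (b : countableBasis α) (s : List (countableBasis α)) :
    Bornology.IsBounded (refiningTree W (b :: s)) := by
  rw [refiningTree]
  split_ifs with h
  exacts [h.2.1, Bornology.isBounded_empty]

theorem diam_refiningTree_cons_le (b : countableBasis α) (s : List (countableBasis α)) :
    diam (refiningTree W (b :: s)) ≤ (1 / 2) ^ s.length := by
  rw [refiningTree]
  split_ifs with h
  exacts [h.2.2, by simp]

theorem refiningTree_eq_iUnion (hW : IsOpen W) (s : List (countableBasis α)) :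
    refiningTree W s = ⋃ b, refiningTree W (b :: s) := by
  refine Subset.antisymm (fun x hx => ?_)
    (iUnion_subset fun b => subset_closure.trans (closure_refiningTree_cons_subset b s))
  obtain ⟨ε, hε, hball⟩ := Metric.isOpen_iff.1 (isOpen_refiningTree hW s) x hx
  set r := min (ε / 2) ((1 / 2) ^ s.length / 2)
  have hr : 0 < r := by positivity
  obtain ⟨b, hb, hxb, hbr⟩ :=
    (isBasis_countableBasis α).exists_subset_of_mem_open (mem_ball_self hr) isOpen_ball
  refine mem_iUnion.2 ⟨⟨b, hb⟩, ?_⟩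
  rw [refiningTree, if_pos]
  · exact hxb
  have hrε : r ≤ ε / 2 := min_le_left _ _
  have hrs : r ≤ (1 / 2) ^ s.length / 2 := min_le_right _ _
  refine ⟨?_, isBounded_ball.subset hbr, ?_⟩
  · calc closure b ⊆ closedBall x r :=
          closure_minimal (hbr.trans ball_subset_closedBall) isClosed_closedBall
      _ ⊆ ball x ε := closedBall_subset_ball (by linarith)
      _ ⊆ refiningTree W s := hball
  · calc diam b ≤ diam (ball x r) := diam_mono hbr isBounded_ball
      _ ≤ 2 * r := diam_ball hr.le
      _ ≤ (1 / 2) ^ s.length := by linarith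

end Metric

section NearlyOpen

variable {P X : Type*} [TopologicalSpace P] [TopologicalSpace X] {π : P → X}

theorem isMeagre_interior_closure_image_diff [PolishSpace P] [T2Space X] (hπ : Continuous π)
    (hnear : ∀ S, IsOpen S → π '' S ⊆ interior (closure (π '' S))) {W : Set P}
    (hW : IsOpen W) : IsMeagre (interior (closure (π '' W)) \ π '' W) := by
  let := upgradeIsCompletelyMetrizable P
  set T := Metric.refiningTree W
  set D : Set P → Set X := fun S => interior (closure (π '' S))
  have hbranch : ∀ s, IsMeagre (D (T s) \ ⋃ b, D (T (b :: s))) := fun s => by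
    refine (isNowhereDense_diff_of_subset_closure (isOpen_iUnion fun b => isOpen_interior)
      (interior_subset.trans (closure_mono ?_))).isMeagre
    rw [show T s = ⋃ b, T (b :: s) from Metric.refiningTree_eq_iUnion hW s, image_iUnion]
    exact iUnion_mono fun b => hnear _ (Metric.isOpen_refiningTree hW _)
  -- A point of `interior (closure (π '' W))` outside all the `hbranch` sets follows a branch
  -- of the tree; the branch shrinks to some `g ∈ W`, and then `π g` is that point.
  refine (isMeagre_iUnion hbranch).mono fun y ⟨hyW, hyπ⟩ => ?_
  by_contra hgood
  have hstep : ∀ s, y ∈ D (T s) → ∃ b, y ∈ D (T (b :: s)) := fun s hs =>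
    mem_iUnion.1 (not_not.1 fun h => hgood (mem_iUnion.2 ⟨s, hs, h⟩))
  obtain ⟨p, hlen, hcons, hp⟩ := exists_seq_cons_of_forall_exists _ hyW hstep
  set A : ℕ → Set P := fun n => T (p (n + 1))
  have hA : Antitone A := antitone_nat_of_succ_le fun n => by
    obtain ⟨b, hb⟩ := hcons (n + 1)
    simp only [A, hb]
    exact subset_closure.trans (Metric.closure_refiningTree_cons_subset _ _)
  have hne : ∀ n, (A n).Nonempty := fun n => by
    by_contra h
    simpa [D, A, not_nonempty_iff_eq_empty.1 h] using hp (n + 1)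
  have hdiam : ∀ n, Metric.diam (A n) ≤ (1 / 2) ^ n := fun n => by
    obtain ⟨b, hb⟩ := hcons n
    simpa only [A, hb, hlen] using Metric.diam_refiningTree_cons_le b (p n)
  obtain ⟨g, hgA, hgt⟩ := Metric.exists_mem_closure_tendsto_smallSets hA hne
    (fun n => by obtain ⟨b, hb⟩ := hcons n; simpa only [A, hb] using
      Metric.isBounded_refiningTree_cons b (p n))
    (squeeze_zero (fun n => Metric.diam_nonneg) hdiam
      (tendsto_pow_atTop_nhds_zero_of_lt_one (by norm_num) (by norm_num)))
  have hgW : g ∈ W := by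
    obtain ⟨b, hb⟩ := hcons 0
    rw [List.length_eq_zero_iff.1 (hlen 0)] at hb
    exact Metric.closure_refiningTree_cons_subset b [] (hb ▸ hgA 0 : g ∈ closure (T [b]))
  have hyg : y = π g := by
    refine eq_of_nhds_neBot (clusterPt_iff_forall_mem_closure.2 fun N hN => ?_).neBot
    obtain ⟨n, hn⟩ := (tendsto_smallSets_iff.1 hgt _ (hπ.continuousAt hN)).exists
    exact closure_mono (image_subset_iff.2 hn) (interior_subset (hp (n + 1)))
  exact hyπ ⟨g, hgW, hyg.symm⟩

theorem image_inter_image_nonempty [PolishSpace P] [T2Space X] [BaireSpace X]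
    (hπ : Continuous π) (hnear : ∀ S, IsOpen S → π '' S ⊆ interior (closure (π '' S)))
    {S T : Set P} (hS : IsOpen S) (hT : IsOpen T)
    (h : (interior (closure (π '' S)) ∩ interior (closure (π '' T))).Nonempty) :
    (π '' S ∩ π '' T).Nonempty := by
  by_contra hST
  refine not_isMeagre_of_isOpen (isOpen_interior.inter isOpen_interior) h
    (((isMeagre_interior_closure_image_diff hπ hnear hS).union
      (isMeagre_interior_closure_image_diff hπ hnear hT)).mono ?_)
  rintro x ⟨hxS, hxT⟩
  by_cases hx : x ∈ π '' S
  · exact Or.inr ⟨hxT, fun hx' => hST ⟨x, hx, hx'⟩⟩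
  · exact Or.inl ⟨hxS, hx⟩

end NearlyOpen

section OrbitMap

variable {G X : Type*} [Group G] [TopologicalSpace G] [IsTopologicalGroup G]
  [TopologicalSpace X] [MulAction G X] [ContinuousSMul G X]

theorem mem_interior_closure_image_smul [SecondCountableTopology G] {z : X}
    (hz : ¬IsMeagre (MulAction.orbit G z)) {V : Set G} (hV : V ∈ 𝓝 1) :
    z ∈ interior (closure ((· • z) '' V)) := by
  obtain ⟨W, hW, h1W, hWV⟩ :
      ∃ W : Set G, IsOpen W ∧ (1 : G) ∈ W ∧ ∀ a ∈ W, ∀ b ∈ W, a⁻¹ * b ∈ V := by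
    obtain ⟨u, v, hu, h1u, hv, h1v, huv⟩ := mem_nhds_prod_iff'.1
      ((continuous_fst.inv.mul continuous_snd).continuousAt.preimage_mem_nhds (by simpa using hV) :
        (fun q : G × G => q.1⁻¹ * q.2) ⁻¹' V ∈ 𝓝 ((1 : G), (1 : G)))
    exact ⟨u ∩ v, hu.inter hv, ⟨h1u, h1v⟩, fun a ha b hb => huv (mk_mem_prod ha.1 hb.2)⟩
  set A := (· • z) '' W
  -- countably many translates of `A` cover the non-meagre orbit
  have hA : (interior (closure A)).Nonempty := by
    rw [nonempty_iff_ne_empty]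
    intro hA
    obtain ⟨T, hTc, hTcov⟩ := isOpen_iUnion_countable (fun g : G => g • W) fun g => hW.smul g
    refine hz ((isMeagre_biUnion (f := fun g => g • A) hTc fun g _ => ?_).mono ?_)
    · have : IsNowhereDense (g • A) := by
        rw [IsNowhereDense, closure_smul, interior_smul, hA, smul_set_empty]
      exact this.isMeagre
    · rintro _ ⟨g, rfl⟩
      have hg : g ∈ ⋃ h ∈ T, h • W := hTcov ▸ mem_iUnion.2 ⟨g, 1, h1W, mul_one g⟩
      obtain ⟨h, hT, w, hw, rfl⟩ := mem_iUnion₂.1 hg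
      exact mem_iUnion₂.2 ⟨h, hT, w • z, ⟨w, hw, rfl⟩, (mul_smul h w z).symm⟩
  obtain ⟨x, hx⟩ := hA
  obtain ⟨_, hwz, w, hw, rfl⟩ := mem_closure_iff.1 (interior_subset hx) _ isOpen_interior hx
  have hzw : z ∈ w⁻¹ • interior (closure A) := ⟨w • z, hwz, inv_smul_smul w z⟩
  rw [← interior_smul, ← closure_smul] at hzw
  refine interior_mono (closure_mono ?_) hzw
  rintro _ ⟨_, ⟨b, hb, rfl⟩, rfl⟩
  exact ⟨w⁻¹ * b, hWV w hw b hb, mul_smul _ _ _⟩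

theorem image_smul_subset_interior_closure [SecondCountableTopology G] {x₀ : X}
    (hx₀ : ¬IsMeagre (MulAction.orbit G x₀)) {S : Set G} (hS : IsOpen S) :
    (· • x₀) '' S ⊆ interior (closure ((· • x₀) '' S)) := by
  rintro _ ⟨g, hg, rfl⟩
  have hV : (· * g) ⁻¹' S ∈ 𝓝 (1 : G) :=
    (continuous_mul_const g).continuousAt.preimage_mem_nhds (by simpa using hS.mem_nhds hg)
  refine interior_mono (closure_mono ?_)
    (mem_interior_closure_image_smul (by rwa [MulAction.orbit_smul]) hV)
  rintro _ ⟨v, hv, rfl⟩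
  exact ⟨v * g, hv, mul_smul v g x₀⟩

theorem exists_smul_eq_smul_of_mem_closure [PolishSpace G] [T2Space X] [BaireSpace X]
    {x₀ : X} (hx₀ : ¬IsMeagre (MulAction.orbit G x₀)) {H A : Set G} (hH : IsOpen H) (hA : IsOpen A)
    (h1A : (1 : G) ∈ A) (hcl : x₀ ∈ closure ((· • x₀) '' H)) :
    ∃ h ∈ H, ∃ a ∈ A, h • x₀ = a • x₀ := by
  have hnear := fun S (hS : IsOpen S) => image_smul_subset_interior_closure hx₀ hS
  have hx₀A : x₀ ∈ interior (closure ((· • x₀) '' A)) := hnear A hA ⟨1, h1A, one_smul G x₀⟩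
  obtain ⟨_, hDA, h, hh, rfl⟩ := mem_closure_iff.1 hcl _ isOpen_interior hx₀A
  obtain ⟨_, ⟨h', hh', rfl⟩, a, ha, heq⟩ := image_inter_image_nonempty
    (continuous_id.smul continuous_const) hnear hH hA ⟨_, hnear H hH ⟨h, hh, rfl⟩, hDA⟩
  exact ⟨h', hh', a, ha, heq.symm⟩

end OrbitMap

/-- **Statement 15.** Let `G` be a Polish group, `X` a `G`-flow with a point `x₀` whose
orbit is comeager, `φ : Y → X` an extension, and `C ⊆ φ⁻¹({x₀})` a closed set invariant
under the stabilizer of `x₀`.  Then `cl(G·C) ∩ φ⁻¹({x₀}) = C`. -/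
theorem statement15 {G : Type u} [Group G] [TopologicalSpace G] [IsTopologicalGroup G]
    [PolishSpace G]
    (F : GFlow.{u, v} G) (x₀ : F.X) (hx₀ : IsMeagre ((MulAction.orbit G x₀)ᶜ : Set F.X))
    (Y : GFlow.{u, w} G) (φ : Y.X → F.X) (hφ : IsExtension Y F φ)
    (C : Set Y.X) (hCsub : C ⊆ φ ⁻¹' {x₀}) (hCclosed : IsClosed C)
    (hCinv : ∀ g : G, g • x₀ = x₀ → ∀ c ∈ C, g • c ∈ C) :
    closure {y : Y.X | ∃ g : G, ∃ c ∈ C, y = g • c} ∩ φ ⁻¹' {x₀} = C := by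
  obtain ⟨⟨hφc, hφeq⟩, -⟩ := hφ
  have horbit : ¬IsMeagre (MulAction.orbit G x₀) := fun h =>
    not_isMeagre_of_isOpen isOpen_univ univ_nonempty ((h.union hx₀).mono fun x _ => em _)
  refine Subset.antisymm (fun p ⟨hpGC, hpx⟩ => ?_)
    fun c hc => ⟨subset_closure ⟨1, c, hc, (one_smul G c).symm⟩, hCsub hc⟩
  rw [← hCclosed.closure_eq, mem_closure_iff]
  intro O hO hpO
  obtain ⟨A, O', hA, h1A, hO', hpO', hAO'⟩ := mem_nhds_prod_iff'.1
    ((continuous_fst.inv.smul continuous_snd).continuousAt.preimage_mem_nhds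
      (by simpa using hO.mem_nhds hpO) : (fun q : G × Y.X => q.1⁻¹ • q.2) ⁻¹' O ∈ 𝓝 (1, p))
  set H := ⋃ c ∈ C, (fun g : G => g • c) ⁻¹' O'
  have hH : IsOpen H :=
    isOpen_biUnion fun c _ => hO'.preimage (continuous_id.smul continuous_const)
  have hcl : x₀ ∈ closure ((· • x₀) '' H) := mem_closure_iff.2 fun N hN hx₀N => by
    obtain ⟨_, ⟨hφN, hO'y⟩, g, c, hc, rfl⟩ := mem_closure_iff.1 hpGC (φ ⁻¹' N ∩ O')
      ((hN.preimage hφc).inter hO') ⟨by rwa [mem_preimage, hpx], hpO'⟩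
    refine ⟨g • x₀, ?_, g, mem_iUnion₂.2 ⟨c, hc, hO'y⟩, rfl⟩
    rwa [mem_preimage, hφeq, hCsub hc] at hφN
  obtain ⟨h, hh, a, ha, hha⟩ := exists_smul_eq_smul_of_mem_closure horbit hH hA h1A hcl
  obtain ⟨c, hc, hcO'⟩ := mem_iUnion₂.1 hh
  have hstab : (a⁻¹ * h) • x₀ = x₀ := by rw [mul_smul, hha, inv_smul_smul]
  refine ⟨(a⁻¹ * h) • c, ?_, hCinv _ hstab c hc⟩
  simpa [mul_smul] using hAO' (mk_mem_prod ha hcO')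
end
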